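/- arXiv:1709.05758 — 5 statements merged into one kernel-verified Lean document; each statement's English description precedes it below -/
import Mathlib

section
/- Let Ω ⊆ ℝⁿ be open, let Φ : Ω → ℝᵐ be locally Lipschitz continuous and twice semidifferentiable near a point w̄ ∈ Ω, and let f be a real-valued function that is differentiable on a neighborhood of z̄ := Φ(w̄) whose gradient map F := ∇f is directionally differentiable at z̄ and satisfies the SC¹ limit: lim_{d→0} [ f(z̄+d) − f(z̄) − F(z̄)ᵀd − ½ dᵀF'(z̄;d) ] / ‖d‖² = 0. Then the composite function φ := f ∘ Φ is twice semidifferentiable at w̄ and, for every v ∈ ℝⁿ, φ⁽²⁾(w̄;v) = Φ'(w̄;v)ᵀ F'(Φ(w̄); Φ'(w̄;v)) + F(Φ(w̄))ᵀ Φ⁽²⁾(w̄;v). -/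
open Filter Topology Set

noncomputable section

/-- Euclidean norm on `Fin n → ℝ`. -/
def n2 {n : ℕ} (v : Fin n → ℝ) : ℝ := Real.sqrt (∑ i, v i ^ 2)

/-- First-order semidifferentiability limit for a scalar function. -/
def SemidiffLim {n : ℕ} (f : (Fin n → ℝ) → ℝ) (x v : Fin n → ℝ) (d : ℝ) : Prop :=
  Tendsto (fun p : (Fin n → ℝ) × ℝ => (f (x + p.2 • p.1) - f x) / p.2)
    ((𝓝 v) ×ˢ (𝓝[>] 0)) (𝓝 d)

/-- Second-order semidifferentiability limit for a scalar function, relative to a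
first-order directional derivative function `f'`. -/
def Semidiff2Lim {n : ℕ} (f : (Fin n → ℝ) → ℝ) (x : Fin n → ℝ)
    (f' : (Fin n → ℝ) → ℝ) (w : Fin n → ℝ) (d : ℝ) : Prop :=
  Tendsto (fun p : (Fin n → ℝ) × ℝ =>
      2 * (f (x + p.2 • p.1) - f x - p.2 * f' p.1) / p.2 ^ 2)
    ((𝓝 w) ×ˢ (𝓝[>] 0)) (𝓝 d)

/-- First-order semidifferentiability limit for a vector function (componentwise). -/
def VSemidiffLim {n m : ℕ} (Φ : (Fin n → ℝ) → (Fin m → ℝ)) (x v : Fin n → ℝ)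
    (d : Fin m → ℝ) : Prop :=
  Tendsto (fun p : (Fin n → ℝ) × ℝ => (p.2)⁻¹ • (Φ (x + p.2 • p.1) - Φ x))
    ((𝓝 v) ×ˢ (𝓝[>] 0)) (𝓝 d)

/-- Second-order semidifferentiability limit for a vector function. -/
def VSemidiff2Lim {n m : ℕ} (Φ : (Fin n → ℝ) → (Fin m → ℝ)) (x : Fin n → ℝ)
    (Φ' : (Fin n → ℝ) → (Fin m → ℝ)) (w : Fin n → ℝ) (d : Fin m → ℝ) : Prop :=
  Tendsto (fun p : (Fin n → ℝ) × ℝ =>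
      (2 / p.2 ^ 2) • (Φ (x + p.2 • p.1) - Φ x - p.2 • Φ' p.1))
    ((𝓝 w) ×ˢ (𝓝[>] 0)) (𝓝 d)

/-- A vector function is twice semidifferentiable at `x`. -/
def VTwiceSemidiff {n m : ℕ} (Φ : (Fin n → ℝ) → (Fin m → ℝ)) (x : Fin n → ℝ) : Prop :=
  ∃ Φ' : (Fin n → ℝ) → (Fin m → ℝ),
    (∀ v, VSemidiffLim Φ x v (Φ' v)) ∧ ∀ w, ∃ d, VSemidiff2Lim Φ x Φ' w d

/-- One-sided directional derivative of a vector function: `Φ'(x;v) = d`. -/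
def VHasDirDeriv {n m : ℕ} (Φ : (Fin n → ℝ) → (Fin m → ℝ)) (x v : Fin n → ℝ)
    (d : Fin m → ℝ) : Prop :=
  Tendsto (fun τ : ℝ => τ⁻¹ • (Φ (x + τ • v) - Φ x)) (𝓝[>] 0) (𝓝 d)

/-- The continuous linear map `v ↦ gᵀv` associated with a gradient vector `g`. -/
def gradCLM {m : ℕ} (g : Fin m → ℝ) : (Fin m → ℝ) →L[ℝ] ℝ :=
  ∑ i, g i • ContinuousLinearMap.proj i

/-!
Put `z = Φ wbar`, `q d = dᵀ F'(z; d)` and `u = Φ (wbar + τ v') - Φ wbar`. The SC¹ limit is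
the expansion `f (z + d) = f z + F(z)ᵀ d + q d / 2 + o(‖d‖²)`, and `u = O(τ)` because
`u / τ → Φ'(wbar; v)`.
Hence the second difference quotient of `f ∘ Φ` equals
`q (u / τ) + F(z)ᵀ ((2 / τ²) (u - τ Φ'(wbar; v'))) + o(1)`, whose limit is the chain-rule formula
as soon as `q` is continuous. That holds because `q` is positively homogeneous of degree two, so the
expansion makes it the locally uniform limit, as `s ↓ 0`, of the functions
`x ↦ 2 (f (z + s x) - f z - s F(z)ᵀ x) / s²`, which are continuous near any given point.
-/

section SemidiffChainRule

variable {G : Type*} [NormedAddCommGroup G] [NormedSpace ℝ G]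

section Filter

variable {α : Type*} {l : Filter α} {τ : α → ℝ}

lemma tendsto_of_tendsto_inv_smul {u : α → G} {d : G} (hτ : Tendsto τ l (𝓝[>] 0))
    (hu : Tendsto (fun a => (τ a)⁻¹ • u a) l (𝓝 d)) : Tendsto u l (𝓝 0) := by
  have h := (tendsto_nhds_of_tendsto_nhdsWithin hτ).smul hu
  rw [zero_smul] at h
  refine h.congr' ?_
  filter_upwards [hτ self_mem_nhdsWithin] with a (ha : 0 < τ a)
  rw [smul_smul, mul_inv_cancel₀ ha.ne', one_smul]

lemma isBigO_of_tendsto_inv_smul {u : α → G} {d : G} (hτ : Tendsto τ l (𝓝[>] 0))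
    (hu : Tendsto (fun a => (τ a)⁻¹ • u a) l (𝓝 d)) : u =O[l] τ := by
  have h := (Asymptotics.isBigO_refl τ l).smul (hu.isBigO_one ℝ)
  simp only [smul_eq_mul, mul_one] at h
  refine h.congr' ?_ .rfl
  filter_upwards [hτ self_mem_nhdsWithin] with a (ha : 0 < τ a)
  rw [smul_smul, mul_inv_cancel₀ ha.ne', one_smul]

lemma tendsto_div_sq_of_isLittleO {R : G → ℝ} (hR : R =o[𝓝 0] fun d => ‖d‖ ^ 2)
    {u : α → G} {d : G} (hτ : Tendsto τ l (𝓝[>] 0))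
    (hu : Tendsto (fun a => (τ a)⁻¹ • u a) l (𝓝 d)) :
    Tendsto (fun a => R (u a) / τ a ^ 2) l (𝓝 0) := by
  have hRu := hR.comp_tendsto (tendsto_of_tendsto_inv_smul hτ hu)
  have hu2 : (fun a => ‖u a‖ ^ 2) =O[l] fun a => τ a ^ 2 :=
    (Asymptotics.isBigO_norm_left.2 (isBigO_of_tendsto_inv_smul hτ hu)).pow 2
  exact (hRu.trans_isBigO hu2).tendsto_div_nhds_zero

lemma tendsto_diffQuot_of_hasFDerivAt {f : G → ℝ} {L : G →L[ℝ] ℝ} {z d : G}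
    (hf : HasFDerivAt f L z) {y : α → G} (hτ : Tendsto τ l (𝓝[>] 0))
    (hy : Tendsto (fun a => (τ a)⁻¹ • (y a - z)) l (𝓝 d)) :
    Tendsto (fun a => (f (y a) - f z) / τ a) l (𝓝 (L d)) := by
  have h := hf.hasFDerivWithinAt.lim (tendsto_of_tendsto_inv_smul hτ hy)
    (.of_forall fun _ => mem_univ _) hy
  simpa only [add_sub_cancel, smul_eq_mul, inv_mul_eq_div] using h

lemma tendsto_secondDiffQuot_of_isLittleO {f : G → ℝ} {L : G →L[ℝ] ℝ} {q : G → ℝ} {z d₁ d₂ : G}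
    (hR : (fun d => f (z + d) - f z - L d - (1 / 2) * q d) =o[𝓝 0] fun d => ‖d‖ ^ 2)
    (hq : Continuous q) (hq_smul : ∀ t : ℝ, 0 < t → ∀ x, q (t • x) = t ^ 2 * q x)
    {y e : α → G} (hτ : Tendsto τ l (𝓝[>] 0))
    (hy : Tendsto (fun a => (τ a)⁻¹ • (y a - z)) l (𝓝 d₁))
    (hye : Tendsto (fun a => (2 / τ a ^ 2) • (y a - z - τ a • e a)) l (𝓝 d₂)) :
    Tendsto (fun a => 2 * (f (y a) - f z - τ a * L (e a)) / τ a ^ 2) l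
      (𝓝 (q d₁ + L d₂)) := by
  have h := ((tendsto_div_sq_of_isLittleO hR hτ hy).const_mul 2).add
    (((hq.tendsto d₁).comp hy).add ((L.continuous.tendsto d₂).comp hye))
  rw [mul_zero, zero_add] at h
  refine h.congr' ?_
  filter_upwards [hτ self_mem_nhdsWithin] with a (ha : 0 < τ a)
  simp only [Function.comp_apply, hq_smul _ (inv_pos.2 ha), map_smul, map_sub, smul_eq_mul,
    add_sub_cancel]
  field_simp
  ring

end Filter

lemma tendsto_dirDiffQuot_smul {H : Type*} [NormedAddCommGroup H] [NormedSpace ℝ H]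
    {F : G → H} {z x : G} {a : H} {t : ℝ} (ht : 0 < t)
    (h : Tendsto (fun s : ℝ => s⁻¹ • (F (z + s • x) - F z)) (𝓝[>] 0) (𝓝 a)) :
    Tendsto (fun s : ℝ => s⁻¹ • (F (z + s • t • x) - F z)) (𝓝[>] 0) (𝓝 (t • a)) := by
  have hts : Tendsto (fun s : ℝ => t * s) (𝓝[>] 0) (𝓝[>] 0) := by
    have h := tendsto_comap (f := fun s : ℝ => t * s) (x := 𝓝[>] (0 : ℝ))
    rwa [comap_mulLeft_nhdsGT_zero ht] at h
  refine ((h.comp hts).const_smul t).congr' ?_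
  filter_upwards [self_mem_nhdsWithin] with s (hs : 0 < s)
  simp only [Function.comp_apply, smul_smul, mul_inv, ← mul_assoc, mul_inv_cancel₀ ht.ne', one_mul,
    mul_comm s t]

lemma eventually_forall_mem_ball_smul {P : G → Prop} (hP : ∀ᶠ y in 𝓝 0, P y) (r : ℝ) :
    ∀ᶠ s in 𝓝[>] (0 : ℝ), ∀ x ∈ Metric.ball (0 : G) r, P (s • x) := by
  obtain ⟨δ, hδ, h⟩ := Metric.eventually_nhds_iff.1 hP
  have hsr : Tendsto (fun s : ℝ => s * r) (𝓝[>] 0) (𝓝 0) := by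
    simpa using ((continuous_mul_const r).tendsto 0).mono_left nhdsWithin_le_nhds
  filter_upwards [hsr.eventually_lt_const hδ, self_mem_nhdsWithin] with s hs (hs0 : 0 < s) x hx
  apply h
  rw [mem_ball_zero_iff] at hx
  rw [dist_zero_right, norm_smul, Real.norm_of_nonneg hs0.le]
  calc s * ‖x‖ ≤ s * r := by gcongr
    _ < δ := hs

lemma continuous_of_isLittleO_taylor {f : G → ℝ} {L : G →L[ℝ] ℝ} {q : G → ℝ} {z : G}
    (hf : ∀ᶠ y in 𝓝 z, ContinuousAt f y) (hq_smul : ∀ t : ℝ, 0 < t → ∀ x, q (t • x) = t ^ 2 * q x)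
    (hR : (fun d => f (z + d) - f z - L d - (1 / 2) * q d) =o[𝓝 0] fun d => ‖d‖ ^ 2) :
    Continuous q := by
  refine continuous_iff_continuousAt.2 fun x₀ => ?_
  set r := ‖x₀‖ + 1
  have hr : 0 < r := by positivity
  suffices ContinuousOn q (Metric.ball 0 r) from
    this.continuousAt (Metric.isOpen_ball.mem_nhds (by simp [r]))
  refine TendstoUniformlyOn.continuousOn
    (F := fun s x => 2 * (f (z + s • x) - f z - L (s • x)) / s ^ 2) (p := 𝓝[>] 0) ?_ ?_
  · refine Metric.tendstoUniformlyOn_iff.2 fun ε hε => ?_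
    have hc : 0 < ε / (4 * r ^ 2) := by positivity
    filter_upwards [eventually_forall_mem_ball_smul (hR.def hc) r, self_mem_nhdsWithin]
      with s hs (hs0 : 0 < s) x hx
    have hR_sx := hs x hx
    rw [mem_ball_zero_iff] at hx
    simp only [hq_smul s hs0, norm_smul, Real.norm_eq_abs, abs_of_pos hs0] at hR_sx
    rw [mul_pow, abs_of_nonneg (by positivity : (0 : ℝ) ≤ s ^ 2 * ‖x‖ ^ 2)] at hR_sx
    have hx2 : ‖x‖ ^ 2 < r ^ 2 := by gcongr
    set D := f (z + s • x) - f z - L (s • x)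
    have hD : q x - 2 * D / s ^ 2 = -(2 / s ^ 2) * (D - 1 / 2 * (s ^ 2 * q x)) := by
      field_simp; ring
    rw [Real.dist_eq, hD, abs_mul, abs_neg, abs_of_pos (by positivity)]
    calc 2 / s ^ 2 * |D - 1 / 2 * (s ^ 2 * q x)|
        ≤ 2 / s ^ 2 * (ε / (4 * r ^ 2) * (s ^ 2 * ‖x‖ ^ 2)) := by gcongr
      _ = ε * ‖x‖ ^ 2 / (2 * r ^ 2) := by field_simp; ring
      _ < ε := by rw [div_lt_iff₀ (by positivity)]; nlinarith
  · have hf₀ : ∀ᶠ d in 𝓝 (0 : G), ContinuousAt f (z + d) := by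
      simpa using ((continuous_const_add z).tendsto 0).eventually (by simpa using hf)
    refine (eventually_forall_mem_ball_smul hf₀ r).frequently.mono fun s hs x hx => ?_
    have := hs x hx
    fun_prop

end SemidiffChainRule

lemma gradCLM_apply {m : ℕ} (g x : Fin m → ℝ) : gradCLM g x = ∑ i, g i * x i := by
  simp [gradCLM]

lemma n2_eq_norm {m : ℕ} (d : Fin m → ℝ) :
    n2 d = ‖(WithLp.toLp 2 d : EuclideanSpace ℝ (Fin m))‖ := by
  simp [n2, EuclideanSpace.norm_eq]

lemma isLittleO_norm_sq_of_tendsto_div_n2_sq {m : ℕ} {R : (Fin m → ℝ) → ℝ} (hR0 : R 0 = 0)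
    (h : Tendsto (fun d => R d / n2 d ^ 2) (𝓝[≠] 0) (𝓝 0)) :
    R =o[𝓝 0] fun d => ‖d‖ ^ 2 := by
  have hn2 : (fun d : Fin m → ℝ => n2 d) =O[𝓝 0] fun d => ‖d‖ := by
    simp only [n2_eq_norm]
    exact ((EuclideanSpace.equiv (Fin m) ℝ).symm.toContinuousLinearMap.isBigO_id _).norm_norm
  have hc : ContinuousAt (fun d => R d / n2 d ^ 2) 0 :=
    continuousWithinAt_compl_self.1 (by simpa [ContinuousWithinAt, hR0] using h)
  have ho : R =o[𝓝 0] fun d => n2 d ^ 2 :=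
    (Asymptotics.isLittleO_iff_tendsto' (.of_forall fun d hd => by simp_all [n2_eq_norm])).2
      (by simpa [hR0] using hc.tendsto)
  exact ho.trans_isBigO (hn2.pow 2)

theorem stmt0_general {n m : ℕ}
    (wbar : Fin n → ℝ)
    (Φ : (Fin n → ℝ) → (Fin m → ℝ))
    -- named first- and second-order semiderivatives of Φ at wbar
    (Φ1 Φ2 : (Fin n → ℝ) → (Fin m → ℝ))
    (hΦ1 : ∀ v, VSemidiffLim Φ wbar v (Φ1 v))
    (hΦ2 : ∀ v, VSemidiff2Lim Φ wbar Φ1 v (Φ2 v))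
    -- f is differentiable near Φ(wbar) with gradient map F
    (f : (Fin m → ℝ) → ℝ) (F : (Fin m → ℝ) → (Fin m → ℝ))
    (hdiff : ∃ δ > (0:ℝ), ∀ z : Fin m → ℝ, n2 (z - Φ wbar) < δ →
      HasFDerivAt f (gradCLM (F z)) z)
    -- F is directionally differentiable at Φ(wbar), with F'(Φ(wbar);·) = F1
    (F1 : (Fin m → ℝ) → (Fin m → ℝ))
    (hF1 : ∀ u, VHasDirDeriv F (Φ wbar) u (F1 u))
    -- the SC¹ limit at Φ(wbar)
    (hSC1 : Tendsto (fun d : Fin m → ℝ =>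
        (f (Φ wbar + d) - f (Φ wbar) - (∑ i, F (Φ wbar) i * d i)
          - (1/2) * ∑ i, d i * F1 d i) / (n2 d) ^ 2)
      (𝓝[≠] 0) (𝓝 0)) :
    -- conclusion: φ = f ∘ Φ is twice semidifferentiable at wbar with the chain-rule formula
    (∀ v, SemidiffLim (fun w => f (Φ w)) wbar v (∑ i, F (Φ wbar) i * Φ1 v i)) ∧
    (∀ v, Semidiff2Lim (fun w => f (Φ w)) wbar
        (fun u => ∑ i, F (Φ wbar) i * Φ1 u i) v
        ((∑ i, Φ1 v i * F1 (Φ1 v) i) + ∑ i, F (Φ wbar) i * Φ2 v i)) := by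
  obtain ⟨δ, hδ, hdiff⟩ := hdiff
  set z := Φ wbar
  set q : (Fin m → ℝ) → ℝ := fun d => ∑ i, d i * F1 d i
  have hf_near : ∀ᶠ y in 𝓝 z, HasFDerivAt f (gradCLM (F y)) y := by
    have h : Continuous fun y => n2 (y - z) := by unfold n2; fun_prop
    exact (h.continuousAt.eventually_lt continuousAt_const (by simpa [n2] using hδ)).mono hdiff
  have hq_smul : ∀ t : ℝ, 0 < t → ∀ x, q (t • x) = t ^ 2 * q x := by
    intro t ht x
    have hF1_smul : F1 (t • x) = t • F1 x :=
      tendsto_nhds_unique (hF1 (t • x)) (tendsto_dirDiffQuot_smul ht (hF1 x))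
    simp only [q, hF1_smul, Pi.smul_apply, smul_eq_mul, Finset.mul_sum]
    exact Finset.sum_congr rfl fun i _ => by ring
  have hR : (fun d => f (z + d) - f z - gradCLM (F z) d - (1 / 2) * q d)
      =o[𝓝 0] fun d => ‖d‖ ^ 2 :=
    isLittleO_norm_sq_of_tendsto_div_n2_sq (by simp [q]) (by simpa only [gradCLM_apply] using hSC1)
  have hq : Continuous q :=
    continuous_of_isLittleO_taylor (hf_near.mono fun y hy => hy.continuousAt) hq_smul hR
  refine ⟨fun v => ?_, fun v => ?_⟩
  · simpa only [SemidiffLim, gradCLM_apply] using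
      tendsto_diffQuot_of_hasFDerivAt hf_near.self_of_nhds tendsto_snd (hΦ1 v)
  · simpa only [Semidiff2Lim, gradCLM_apply] using
      tendsto_secondDiffQuot_of_isLittleO hR hq hq_smul tendsto_snd (hΦ1 v) (hΦ2 v)

/-- Chain rule for second semiderivatives of the composition of an SC¹
function `f` (with gradient `F`) with a locally Lipschitz, twice semidifferentiable vector
function `Φ`: the composite `φ = f ∘ Φ` is twice semidifferentiable at `wbar` and
`φ⁽²⁾(wbar;v) = Φ'(wbar;v)ᵀ F'(Φ(wbar);Φ'(wbar;v)) + F(Φ(wbar))ᵀ Φ⁽²⁾(wbar;v)`. -/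
theorem stmt0 {n m : ℕ} (Ω : Set (Fin n → ℝ)) (hΩ : IsOpen Ω)
    (wbar : Fin n → ℝ) (hw : wbar ∈ Ω)
    (Φ : (Fin n → ℝ) → (Fin m → ℝ))
    -- Φ is locally Lipschitz continuous and twice semidifferentiable near wbar, within Ω
    (hnear : ∃ ε > (0:ℝ), {w | n2 (w - wbar) < ε} ⊆ Ω ∧
      (∃ K : ℝ, ∀ y z : Fin n → ℝ, n2 (y - wbar) < ε → n2 (z - wbar) < ε →
        n2 (Φ y - Φ z) ≤ K * n2 (y - z)) ∧
      (∀ w, n2 (w - wbar) < ε → VTwiceSemidiff Φ w))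
    -- named first- and second-order semiderivatives of Φ at wbar
    (Φ1 Φ2 : (Fin n → ℝ) → (Fin m → ℝ))
    (hΦ1 : ∀ v, VSemidiffLim Φ wbar v (Φ1 v))
    (hΦ2 : ∀ v, VSemidiff2Lim Φ wbar Φ1 v (Φ2 v))
    -- f is differentiable near Φ(wbar) with gradient map F
    (f : (Fin m → ℝ) → ℝ) (F : (Fin m → ℝ) → (Fin m → ℝ))
    (hdiff : ∃ δ > (0:ℝ), ∀ z : Fin m → ℝ, n2 (z - Φ wbar) < δ →
      HasFDerivAt f (gradCLM (F z)) z)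
    -- F is directionally differentiable at Φ(wbar), with F'(Φ(wbar);·) = F1
    (F1 : (Fin m → ℝ) → (Fin m → ℝ))
    (hF1 : ∀ u, VHasDirDeriv F (Φ wbar) u (F1 u))
    -- the SC¹ limit at Φ(wbar)
    (hSC1 : Tendsto (fun d : Fin m → ℝ =>
        (f (Φ wbar + d) - f (Φ wbar) - (∑ i, F (Φ wbar) i * d i)
          - (1/2) * ∑ i, d i * F1 d i) / (n2 d) ^ 2)
      (𝓝[≠] 0) (𝓝 0)) :
    -- conclusion: φ = f ∘ Φ is twice semidifferentiable at wbar with the chain-rule formula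
    (∀ v, SemidiffLim (fun w => f (Φ w)) wbar v (∑ i, F (Φ wbar) i * Φ1 v i)) ∧
    (∀ v, Semidiff2Lim (fun w => f (Φ w)) wbar
        (fun u => ∑ i, F (Φ wbar) i * Φ1 u i) v
        ((∑ i, Φ1 v i * F1 (Φ1 v) i) + ∑ i, F (Φ wbar) i * Φ2 v i)) :=
  stmt0_general wbar Φ Φ1 Φ2 hΦ1 hΦ2 f F hdiff F1 hF1 hSC1
end
end

section
/- Let X ⊆ ℝⁿ be a polyhedron contained in an open set Ω, and let f : Ω → ℝ be locally Lipschitz continuous near x̄ ∈ X and twice semidifferentiable at x̄. Consider the statements: (a1) x̄ is a local minimizer of f on X; (a2) f'(x̄;v) ≥ 0 for all v ∈ T(x̄;X), and f⁽²⁾(x̄;v) ≥ 0 for all v ∈ T(x̄;X) with f'(x̄;v) = 0; (a3) f'(x̄;x−x̄) ≥ 0 for all x ∈ X, and f⁽²⁾(x̄;x−x̄) ≥ 0 for all x ∈ X \ {x̄} with f'(x̄;x−x̄) = 0; (b1) x̄ is a strong local minimizer of f on X; (b2) f'(x̄;v) ≥ 0 for all v ∈ T(x̄;X), and f⁽²⁾(x̄;v)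 > 0 for all nonzero v ∈ T(x̄;X) with f'(x̄;v) = 0; (b3) f'(x̄;x−x̄) ≥ 0 for all x ∈ X, and f⁽²⁾(x̄;x−x̄) > 0 for all x ∈ X \ {x̄} with f'(x̄;x−x̄) = 0. Then (b1) ⇔ (b2) ⇔ (b3) ⇒ (a1) ⇒ (a2) ⇔ (a3). -/
open Filter Topology Set

noncomputable section

/-- A polyhedron `{x : Ax ≤ b}`. -/
def IsPolyhedron {n : ℕ} (S : Set (Fin n → ℝ)) : Prop :=
  ∃ (m : ℕ) (A : Matrix (Fin m) (Fin n) ℝ) (b : Fin m → ℝ),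
    S = {x | ∀ i, (∑ j, A i j * x j) ≤ b i}

/-- The tangent cone of `S` at `x`. -/
def TangentCone {n : ℕ} (S : Set (Fin n → ℝ)) (x : Fin n → ℝ) : Set (Fin n → ℝ) :=
  {v | ∃ (xs : ℕ → Fin n → ℝ) (τ : ℕ → ℝ),
    (∀ k, xs k ∈ S) ∧ Tendsto xs atTop (𝓝 x) ∧
    (∀ k, 0 < τ k) ∧ Tendsto τ atTop (𝓝 (0:ℝ)) ∧
    Tendsto (fun k => (τ k)⁻¹ • (xs k - x)) atTop (𝓝 v)}

/-- Local minimizer of `f` on `X`. -/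
def IsLocMin' {n : ℕ} (f : (Fin n → ℝ) → ℝ) (X : Set (Fin n → ℝ)) (xbar : Fin n → ℝ) : Prop :=
  xbar ∈ X ∧ ∃ ε > (0:ℝ), ∀ y ∈ X, n2 (y - xbar) < ε → f xbar ≤ f y

/-- Strong local minimizer of `f` on `X`. -/
def IsStrongLocMin {n : ℕ} (f : (Fin n → ℝ) → ℝ) (X : Set (Fin n → ℝ)) (xbar : Fin n → ℝ) : Prop :=
  xbar ∈ X ∧ ∃ c > (0:ℝ), ∃ ε > (0:ℝ), ∀ y ∈ X, n2 (y - xbar) < ε →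
    f xbar + c * n2 (y - xbar) ^ 2 ≤ f y

/-!
Along a segment `[xbar, x] ⊆ X` the difference quotients of `f` converge to `f'(xbar; x - xbar)`
and `f⁽²⁾(xbar; x - xbar)`, and (quadratic) growth of `f` bounds them from below: this gives
necessity. If quadratic growth fails with constants `1 / (k + 1)`, the normalized directions of
the violating points accumulate at a unit tangent vector `u`; as semidifferentiability is uniform
in the direction, the difference quotients along these points converge to `f'(xbar; u) ≤ 0` and
`f⁽²⁾(xbar; u) ≤ 0`, which gives sufficiency. For a polyhedron every tangent vector is a feasible
direction, so by positive homogeneity of the semiderivatives the conditions over `T(xbar; X)` and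
over `X - xbar` coincide.
-/

section Norm

variable {n : ℕ}

lemma n2_eq_norm_s1 (v : Fin n → ℝ) : n2 v = ‖WithLp.toLp 2 v‖ := by
  simp [n2, EuclideanSpace.norm_eq]

lemma n2_smul (t : ℝ) (v : Fin n → ℝ) : n2 (t • v) = |t| * n2 v := by
  rw [n2_eq_norm_s1, n2_eq_norm_s1, WithLp.toLp_smul, norm_smul, Real.norm_eq_abs]

lemma n2_pos {v : Fin n → ℝ} (hv : v ≠ 0) : 0 < n2 v := by
  rw [n2_eq_norm_s1, norm_pos_iff]
  simpa using hv

lemma exists_subseq_tendsto_inv_n2_smul {d : ℕ → Fin n → ℝ} (hd : ∀ k, d k ≠ 0) :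
    ∃ u ≠ 0, ∃ φ : ℕ → ℕ, StrictMono φ ∧
      Tendsto (fun k => (n2 (d (φ k)))⁻¹ • d (φ k)) atTop (𝓝 u) := by
  have hsphere : ∀ k, (n2 (d k))⁻¹ • d k ∈
      WithLp.ofLp '' Metric.sphere (0 : EuclideanSpace ℝ (Fin n)) 1 := by
    intro k
    refine ⟨WithLp.toLp 2 ((n2 (d k))⁻¹ • d k), ?_, rfl⟩
    rw [mem_sphere_zero_iff_norm, ← n2_eq_norm_s1, n2_smul, abs_inv, abs_of_pos (n2_pos (hd k)),
      inv_mul_cancel₀ (n2_pos (hd k)).ne']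
  obtain ⟨-, ⟨w, hw, rfl⟩, φ, hφ, hlim⟩ :=
    ((isCompact_sphere _ _).image (PiLp.continuous_ofLp 2 _)).tendsto_subseq hsphere
  refine ⟨w.ofLp, fun h => ?_, φ, hφ, hlim⟩
  simp [(WithLp.ofLp_eq_zero 2).1 h] at hw

end Norm

section Polyhedron

variable {n : ℕ} {X : Set (Fin n → ℝ)} {xbar : Fin n → ℝ}

lemma IsPolyhedron.exists_linearMap (hX : IsPolyhedron X) :
    ∃ (m : ℕ) (ℓ : Fin m → (Fin n → ℝ) →ₗ[ℝ] ℝ) (b : Fin m → ℝ),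
      X = {x | ∀ i, ℓ i x ≤ b i} := by
  obtain ⟨m, A, b, rfl⟩ := hX
  exact ⟨m, fun i => (LinearMap.proj i).comp A.mulVecLin, b, rfl⟩

lemma IsPolyhedron.convex (hX : IsPolyhedron X) : Convex ℝ X := by
  obtain ⟨m, ℓ, b, rfl⟩ := hX.exists_linearMap
  intro x hx y hy s t hs ht hst i
  simp only [map_add, map_smul, smul_eq_mul]
  calc s * ℓ i x + t * ℓ i y ≤ s * b i + t * b i :=
        add_le_add (mul_le_mul_of_nonneg_left (hx i) hs) (mul_le_mul_of_nonneg_left (hy i) ht)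
    _ = b i := by rw [← add_mul, hst, one_mul]

lemma Convex.sub_mem_tangentCone (hX : Convex ℝ X) (hxbar : xbar ∈ X) {x : Fin n → ℝ}
    (hx : x ∈ X) : x - xbar ∈ TangentCone X xbar := by
  set τ : ℕ → ℝ := fun k => 1 / (k + 1)
  have hτ : ∀ k, 0 < τ k := fun k => by positivity
  have hτ1 : ∀ k, τ k ≤ 1 := fun k => div_le_one_of_le₀ (by simp) (by positivity)
  refine ⟨fun k => xbar + τ k • (x - xbar), τ,
    fun k => hX.add_smul_sub_mem hxbar hx ⟨(hτ k).le, hτ1 k⟩, ?_, hτ,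
    tendsto_one_div_add_atTop_nhds_zero_nat, ?_⟩
  · simpa [τ] using (tendsto_const_nhds (x := xbar)).add
      ((tendsto_one_div_add_atTop_nhds_zero_nat (𝕜 := ℝ)).smul_const (x - xbar))
  · simp_rw [add_sub_cancel_left, smul_smul, inv_mul_cancel₀ (hτ _).ne', one_smul]
    exact tendsto_const_nhds

lemma map_nonpos_of_mem_tangentCone (ℓ : (Fin n → ℝ) →ₗ[ℝ] ℝ)
    (hℓ : ∀ x ∈ X, ℓ x ≤ ℓ xbar) {v : Fin n → ℝ} (hv : v ∈ TangentCone X xbar) : ℓ v ≤ 0 := by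
  obtain ⟨xs, τ, hxs, -, hτ, -, hlim⟩ := hv
  have hℓ_cont := LinearMap.continuous_of_finiteDimensional (𝕜 := ℝ) ℓ
  refine le_of_tendsto ((hℓ_cont.tendsto v).comp hlim) (Eventually.of_forall fun k => ?_)
  simp only [Function.comp, map_smul, map_sub, smul_eq_mul]
  exact mul_nonpos_of_nonneg_of_nonpos (inv_nonneg.2 (hτ k).le) (sub_nonpos.2 (hℓ _ (hxs k)))

lemma IsPolyhedron.exists_pos_add_smul_mem (hX : IsPolyhedron X) (hxbar : xbar ∈ X)
    {v : Fin n → ℝ} (hv : v ∈ TangentCone X xbar) : ∃ t > (0 : ℝ), xbar + t • v ∈ X := by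
  obtain ⟨m, ℓ, b, rfl⟩ := hX.exists_linearMap
  have hfeasible : ∀ i, ∀ᶠ t in 𝓝[>] (0 : ℝ), ℓ i xbar + t * ℓ i v ≤ b i := by
    intro i
    rcases (hxbar i).eq_or_lt with hactive | hslack
    · have hℓv : ℓ i v ≤ 0 :=
        map_nonpos_of_mem_tangentCone (ℓ i) (fun x hx => hactive ▸ hx i) hv
      filter_upwards [self_mem_nhdsWithin] with t (ht : 0 < t)
      nlinarith
    · have hcont : Tendsto (fun t : ℝ => ℓ i xbar + t * ℓ i v) (𝓝 0) (𝓝 (ℓ i xbar)) := by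
        simpa using ((continuous_mul_const (ℓ i v)).const_add (ℓ i xbar)).tendsto 0
      exact nhdsWithin_le_nhds ((hcont.eventually_lt_const hslack).mono fun _ => le_of_lt)
  obtain ⟨t, ht, htpos⟩ := ((eventually_all.2 hfeasible).and self_mem_nhdsWithin).exists
  exact ⟨t, htpos, fun i => by simpa using ht i⟩

lemma IsPolyhedron.forall_mem_tangentCone_iff (hX : IsPolyhedron X) (hxbar : xbar ∈ X)
    {P : (Fin n → ℝ) → Prop} (hP : ∀ t > (0 : ℝ), ∀ v, P (t • v) ↔ P v) :
    (∀ v ∈ TangentCone X xbar, P v) ↔ ∀ x ∈ X, P (x - xbar) := by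
  refine ⟨fun h x hx => h _ (hX.convex.sub_mem_tangentCone hxbar hx), fun h v hv => ?_⟩
  obtain ⟨t, ht, hmem⟩ := hX.exists_pos_add_smul_mem hxbar hv
  rw [← hP t ht]
  simpa using h _ hmem

end Polyhedron

section Semidifferentiability

variable {n : ℕ} {f : (Fin n → ℝ) → ℝ} {x : Fin n → ℝ} {f1 f2 : (Fin n → ℝ) → ℝ}

lemma tendsto_const_mul_nhdsGT_zero {l : ℝ} (hl : 0 < l) :
    Tendsto (fun t : ℝ => l * t) (𝓝[>] 0) (𝓝[>] 0) :=
  tendsto_nhdsWithin_iff.2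
    ⟨by simpa using ((continuous_const_mul l).tendsto 0).mono_left nhdsWithin_le_nhds,
      eventually_nhdsWithin_of_forall fun _ ht => mul_pos hl ht⟩

lemma SemidiffLim.tendsto_ray {v : Fin n → ℝ} {d : ℝ} (h : SemidiffLim f x v d) :
    Tendsto (fun t : ℝ => (f (x + t • v) - f x) / t) (𝓝[>] 0) (𝓝 d) := by
  simpa [Function.comp_def] using h.comp (tendsto_const_nhds.prodMk tendsto_id)

lemma Semidiff2Lim.tendsto_ray {v : Fin n → ℝ} {d : ℝ} (h : Semidiff2Lim f x f1 v d) :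
    Tendsto (fun t : ℝ => 2 * (f (x + t • v) - f x - t * f1 v) / t ^ 2) (𝓝[>] 0) (𝓝 d) := by
  simpa [Function.comp_def] using h.comp (tendsto_const_nhds.prodMk tendsto_id)

lemma semidiff_pos_smul (hf1 : ∀ v, SemidiffLim f x v (f1 v)) {l : ℝ} (hl : 0 < l)
    (v : Fin n → ℝ) : f1 (l • v) = l * f1 v := by
  refine tendsto_nhds_unique (hf1 (l • v)).tendsto_ray
    ((((hf1 v).tendsto_ray.comp (tendsto_const_mul_nhdsGT_zero hl)).const_mul l).congr' ?_)
  filter_upwards [self_mem_nhdsWithin] with t (ht : 0 < t)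
  simp only [Function.comp, smul_smul, mul_comm t l]
  field_simp

lemma semidiff2_pos_smul (hf1 : ∀ v, SemidiffLim f x v (f1 v))
    (hf2 : ∀ w, Semidiff2Lim f x f1 w (f2 w)) {l : ℝ} (hl : 0 < l) (v : Fin n → ℝ) :
    f2 (l • v) = l ^ 2 * f2 v := by
  refine tendsto_nhds_unique (hf2 (l • v)).tendsto_ray
    ((((hf2 v).tendsto_ray.comp (tendsto_const_mul_nhdsGT_zero hl)).const_mul (l ^ 2)).congr' ?_)
  filter_upwards [self_mem_nhdsWithin] with t (ht : 0 < t)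
  simp only [Function.comp, smul_smul, mul_comm t l, semidiff_pos_smul hf1 hl]
  field_simp

lemma semidiff2_zero (hf1 : ∀ v, SemidiffLim f x v (f1 v))
    (hf2 : ∀ w, Semidiff2Lim f x f1 w (f2 w)) : f2 0 = 0 := by
  have h := semidiff2_pos_smul hf1 hf2 two_pos (0 : Fin n → ℝ)
  rw [smul_zero] at h
  linarith

lemma SemidiffLim.nonneg_of_eventually_le {v : Fin n → ℝ} {d : ℝ} (h : SemidiffLim f x v d)
    (hle : ∀ᶠ t in 𝓝[>] (0 : ℝ), f x ≤ f (x + t • v)) : 0 ≤ d :=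
  ge_of_tendsto h.tendsto_ray <| by
    filter_upwards [hle, self_mem_nhdsWithin] with t hfx (ht : 0 < t)
    exact div_nonneg (sub_nonneg.2 hfx) ht.le

lemma Semidiff2Lim.le_of_eventually_le {v : Fin n → ℝ} {a d : ℝ}
    (h : Semidiff2Lim f x f1 v d) (hv : f1 v = 0)
    (hle : ∀ᶠ t in 𝓝[>] (0 : ℝ), f x + a * t ^ 2 ≤ f (x + t • v)) : 2 * a ≤ d :=
  ge_of_tendsto h.tendsto_ray <| by
    filter_upwards [hle, self_mem_nhdsWithin] with t hfx (ht : 0 < t)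
    rw [hv, le_div_iff₀ (by positivity)]
    linarith

end Semidifferentiability

section QuadraticGrowth

variable {n : ℕ} {f : (Fin n → ℝ) → ℝ} {X : Set (Fin n → ℝ)} {xbar : Fin n → ℝ}
  {f1 f2 : (Fin n → ℝ) → ℝ} {c : ℝ}

def HasQuadraticGrowthOn (f : (Fin n → ℝ) → ℝ) (X : Set (Fin n → ℝ)) (xbar : Fin n → ℝ)
    (c : ℝ) : Prop :=
  ∃ ε > (0 : ℝ), ∀ y ∈ X, n2 (y - xbar) < ε → f xbar + c * n2 (y - xbar) ^ 2 ≤ f y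

lemma IsLocMin'.hasQuadraticGrowthOn_zero (h : IsLocMin' f X xbar) :
    HasQuadraticGrowthOn f X xbar 0 := by
  obtain ⟨-, ε, hε, hmin⟩ := h
  exact ⟨ε, hε, fun y hy hyε => by simpa using hmin y hy hyε⟩

lemma HasQuadraticGrowthOn.isLocMin' (h : HasQuadraticGrowthOn f X xbar c) (hc : 0 ≤ c)
    (hxbar : xbar ∈ X) : IsLocMin' f X xbar := by
  obtain ⟨ε, hε, hmin⟩ := h
  exact ⟨hxbar, ε, hε, fun y hy hyε =>
    (le_add_of_nonneg_right (by positivity)).trans (hmin y hy hyε)⟩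

lemma IsStrongLocMin.isLocMin' (h : IsStrongLocMin f X xbar) : IsLocMin' f X xbar :=
  let ⟨hxbar, _, hc, hg⟩ := h
  HasQuadraticGrowthOn.isLocMin' hg hc.le hxbar

lemma HasQuadraticGrowthOn.eventually_le_add_smul (h : HasQuadraticGrowthOn f X xbar c)
    (hX : Convex ℝ X) (hxbar : xbar ∈ X) {x : Fin n → ℝ} (hx : x ∈ X) :
    ∀ᶠ t in 𝓝[>] (0 : ℝ),
      f xbar + c * n2 (x - xbar) ^ 2 * t ^ 2 ≤ f (xbar + t • (x - xbar)) := by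
  obtain ⟨ε, hε, hmin⟩ := h
  have hsmall : ∀ᶠ t in 𝓝 (0 : ℝ), t < 1 ∧ t * n2 (x - xbar) < ε :=
    (tendsto_id.eventually_lt_const one_pos).and
      (((continuous_mul_const _).tendsto 0).eventually_lt_const (by simpa using hε))
  filter_upwards [nhdsWithin_le_nhds hsmall, self_mem_nhdsWithin] with t ⟨ht1, htε⟩ (ht : 0 < t)
  have hnorm : n2 (xbar + t • (x - xbar) - xbar) = t * n2 (x - xbar) := by
    rw [add_sub_cancel_left, n2_smul, abs_of_pos ht]
  have hgrowth := hmin _ (hX.add_smul_sub_mem hxbar hx ⟨ht.le, ht1.le⟩) (hnorm ▸ htε)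
  rw [hnorm] at hgrowth
  linarith

theorem IsLocMin'.firstOrder_secondOrder_nonneg (h : IsLocMin' f X xbar) (hX : Convex ℝ X)
    (hf1 : ∀ v, SemidiffLim f xbar v (f1 v)) (hf2 : ∀ w, Semidiff2Lim f xbar f1 w (f2 w)) :
    (∀ x ∈ X, 0 ≤ f1 (x - xbar)) ∧
      (∀ x ∈ X, x ≠ xbar → f1 (x - xbar) = 0 → 0 ≤ f2 (x - xbar)) := by
  have hg := h.hasQuadraticGrowthOn_zero
  refine ⟨fun x hx => (hf1 _).nonneg_of_eventually_le ?_, fun x hx _ h0 => ?_⟩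
  · simpa using hg.eventually_le_add_smul hX h.1 hx
  · simpa using (hf2 _).le_of_eventually_le h0 (hg.eventually_le_add_smul hX h.1 hx)

theorem IsStrongLocMin.firstOrder_nonneg_secondOrder_pos (h : IsStrongLocMin f X xbar)
    (hX : Convex ℝ X) (hf1 : ∀ v, SemidiffLim f xbar v (f1 v))
    (hf2 : ∀ w, Semidiff2Lim f xbar f1 w (f2 w)) :
    (∀ x ∈ X, 0 ≤ f1 (x - xbar)) ∧
      (∀ x ∈ X, x ≠ xbar → f1 (x - xbar) = 0 → 0 < f2 (x - xbar)) := by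
  refine ⟨(h.isLocMin'.firstOrder_secondOrder_nonneg hX hf1 hf2).1, fun x hx hne h0 => ?_⟩
  obtain ⟨hxbar, c, hc, hg : HasQuadraticGrowthOn f X xbar c⟩ := h
  have hpos : 0 < 2 * (c * n2 (x - xbar) ^ 2) := by
    have := n2_pos (sub_ne_zero.2 hne)
    positivity
  exact hpos.trans_le ((hf2 _).le_of_eventually_le h0
    (by simpa only [mul_assoc] using hg.eventually_le_add_smul hX hxbar hx))

end QuadraticGrowth

section Sufficiency

variable {n : ℕ} {f : (Fin n → ℝ) → ℝ} {X : Set (Fin n → ℝ)} {xbar : Fin n → ℝ}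
  {f1 f2 : (Fin n → ℝ) → ℝ}

lemma exists_seq_of_not_isStrongLocMin (hxbar : xbar ∈ X) (h : ¬ IsStrongLocMin f X xbar) :
    ∃ y : ℕ → Fin n → ℝ, (∀ k, y k ∈ X) ∧ (∀ k, n2 (y k - xbar) < 1 / (k + 1)) ∧
      ∀ k, f (y k) < f xbar + 1 / (k + 1) * n2 (y k - xbar) ^ 2 := by
  simp only [IsStrongLocMin, hxbar, true_and, not_exists, not_and, not_forall, not_le] at h
  choose y hyX hyε hyf using fun k : ℕ =>
    h (1 / (k + 1)) (by positivity) (1 / (k + 1)) (by positivity)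
  exact ⟨y, hyX, hyε, hyf⟩

theorem isStrongLocMin_of_firstOrder_nonneg_secondOrder_pos (hX : Convex ℝ X)
    (hxbar : xbar ∈ X) (hf1 : ∀ v, SemidiffLim f xbar v (f1 v))
    (hf2 : ∀ w, Semidiff2Lim f xbar f1 w (f2 w))
    (h1 : ∀ v ∈ TangentCone X xbar, 0 ≤ f1 v)
    (h2 : ∀ v ∈ TangentCone X xbar, v ≠ 0 → f1 v = 0 → 0 < f2 v) :
    IsStrongLocMin f X xbar := by
  by_contra hnot
  obtain ⟨y, hyX, hyε, hyf⟩ := exists_seq_of_not_isStrongLocMin hxbar hnot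
  have hy : ∀ k, y k - xbar ≠ 0 := fun k h => by simpa [sub_eq_zero.1 h, n2] using hyf k
  obtain ⟨u, hu, φ, hφ, hv⟩ := exists_subseq_tendsto_inv_n2_smul hy
  set τ : ℕ → ℝ := fun k => n2 (y (φ k) - xbar)
  set v : ℕ → Fin n → ℝ := fun k => (τ k)⁻¹ • (y (φ k) - xbar)
  set e : ℕ → ℝ := fun k => 1 / (φ k + 1)
  have hτpos : ∀ k, 0 < τ k := fun k => n2_pos (hy _)
  have he : Tendsto e atTop (𝓝 0) :=
    tendsto_one_div_add_atTop_nhds_zero_nat.comp hφ.tendsto_atTop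
  have hτ : Tendsto τ atTop (𝓝 0) :=
    squeeze_zero (fun k => (hτpos k).le) (fun k => (hyε _).le) he
  have hy_eq : ∀ k, xbar + τ k • v k = y (φ k) := fun k => by
    rw [smul_smul, mul_inv_cancel₀ (hτpos k).ne', one_smul, add_sub_cancel]
  have hpair : Tendsto (fun k => (v k, τ k)) atTop ((𝓝 u) ×ˢ (𝓝[>] 0)) :=
    hv.prodMk (tendsto_nhdsWithin_iff.2 ⟨hτ, Eventually.of_forall hτpos⟩)
  have hyx : Tendsto (fun k => y (φ k)) atTop (𝓝 xbar) := by
    simpa [hy_eq] using (tendsto_const_nhds (x := xbar)).add (hτ.smul hv)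
  have huT : u ∈ TangentCone X xbar := ⟨_, τ, fun k => hyX _, hyx, hτpos, hτ, hv⟩
  have hf1v : ∀ k, 0 ≤ f1 (v k) := fun k => by
    rw [semidiff_pos_smul hf1 (inv_pos.2 (hτpos k))]
    exact mul_nonneg (inv_pos.2 (hτpos k)).le (h1 _ (hX.sub_mem_tangentCone hxbar (hyX _)))
  have hf1u : f1 u ≤ 0 := by
    refine le_of_tendsto_of_tendsto' ((hf1 u).comp hpair) (by simpa using he.mul hτ) fun k => ?_
    simp only [Function.comp, hy_eq]
    rw [div_le_iff₀ (hτpos k)]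
    nlinarith [hyf (φ k)]
  have hf2u : f2 u ≤ 0 := by
    refine le_of_tendsto_of_tendsto' ((hf2 u).comp hpair) (by simpa using he.const_mul 2)
      fun k => ?_
    simp only [Function.comp, hy_eq]
    rw [div_le_iff₀ (pow_pos (hτpos k) 2)]
    nlinarith [hyf (φ k), mul_nonneg (hτpos k).le (hf1v k)]
  exact (h2 u huT hu (le_antisymm hf1u (h1 u huT))).not_ge hf2u

end Sufficiency

section TangentCone

variable {n : ℕ} {f : (Fin n → ℝ) → ℝ} {X : Set (Fin n → ℝ)} {xbar : Fin n → ℝ}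
  {f1 f2 : (Fin n → ℝ) → ℝ}

lemma IsPolyhedron.firstOrder_tangentCone_iff (hX : IsPolyhedron X) (hxbar : xbar ∈ X)
    (hf1 : ∀ v, SemidiffLim f xbar v (f1 v)) :
    (∀ v ∈ TangentCone X xbar, 0 ≤ f1 v) ↔ ∀ x ∈ X, 0 ≤ f1 (x - xbar) :=
  hX.forall_mem_tangentCone_iff hxbar fun t ht v => by
    rw [semidiff_pos_smul hf1 ht, mul_nonneg_iff_of_pos_left ht]

lemma IsPolyhedron.secondOrder_tangentCone_iff (hX : IsPolyhedron X) (hxbar : xbar ∈ X)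
    (hf1 : ∀ v, SemidiffLim f xbar v (f1 v)) (hf2 : ∀ w, Semidiff2Lim f xbar f1 w (f2 w))
    {R : ℝ → Prop} (hR : ∀ s > (0 : ℝ), ∀ a, R (s * a) ↔ R a) :
    (∀ v ∈ TangentCone X xbar, v ≠ 0 → f1 v = 0 → R (f2 v)) ↔
      ∀ x ∈ X, x ≠ xbar → f1 (x - xbar) = 0 → R (f2 (x - xbar)) := by
  simp_rw [← sub_ne_zero (b := xbar)]
  refine hX.forall_mem_tangentCone_iff hxbar fun t ht v => ?_
  rw [semidiff_pos_smul hf1 ht, semidiff2_pos_smul hf1 hf2 ht, smul_ne_zero_iff_right ht.ne',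
    mul_eq_zero_iff_left ht.ne', hR _ (by positivity)]

end TangentCone

theorem stmt1_general {n : ℕ} (X : Set (Fin n → ℝ))
    (hX : IsPolyhedron X)
    (f : (Fin n → ℝ) → ℝ) (xbar : Fin n → ℝ) (hxbar : xbar ∈ X)
    -- f is twice semidifferentiable at xbar, with f'(xbar;·) = f1 and f⁽²⁾(xbar;·) = f2
    (f1 f2 : (Fin n → ℝ) → ℝ)
    (hf1 : ∀ v, SemidiffLim f xbar v (f1 v))
    (hf2 : ∀ w, Semidiff2Lim f xbar f1 w (f2 w)) :
    let a1 := IsLocMin' f X xbar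
    let a2 := (∀ v ∈ TangentCone X xbar, 0 ≤ f1 v) ∧
      (∀ v ∈ TangentCone X xbar, f1 v = 0 → 0 ≤ f2 v)
    let a3 := (∀ x ∈ X, 0 ≤ f1 (x - xbar)) ∧
      (∀ x ∈ X, x ≠ xbar → f1 (x - xbar) = 0 → 0 ≤ f2 (x - xbar))
    let b1 := IsStrongLocMin f X xbar
    let b2 := (∀ v ∈ TangentCone X xbar, 0 ≤ f1 v) ∧
      (∀ v ∈ TangentCone X xbar, v ≠ 0 → f1 v = 0 → 0 < f2 v)
    let b3 := (∀ x ∈ X, 0 ≤ f1 (x - xbar)) ∧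
      (∀ x ∈ X, x ≠ xbar → f1 (x - xbar) = 0 → 0 < f2 (x - xbar))
    (b1 ↔ b2) ∧ (b2 ↔ b3) ∧ (b1 → a1) ∧ (a1 → a2) ∧ (a2 ↔ a3) := by
  intro a1 a2 a3 b1 b2 b3
  have first_iff := hX.firstOrder_tangentCone_iff hxbar hf1
  have b2_iff_b3 : b2 ↔ b3 := and_congr first_iff
    (hX.secondOrder_tangentCone_iff hxbar hf1 hf2 fun _ hs _ => mul_pos_iff_of_pos_left hs)
  have a2_iff_a3 : a2 ↔ a3 := by
    refine and_congr first_iff (Iff.trans ?_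
      (hX.secondOrder_tangentCone_iff hxbar hf1 hf2 fun _ hs _ => mul_nonneg_iff_of_pos_left hs))
    refine ⟨fun h v hv _ => h v hv, fun h v hv => ?_⟩
    rcases eq_or_ne v 0 with rfl | hv0
    exacts [fun _ => (semidiff2_zero hf1 hf2).ge, h v hv hv0]
  refine ⟨⟨fun hb1 => b2_iff_b3.2 (hb1.firstOrder_nonneg_secondOrder_pos hX.convex hf1 hf2),
      fun hb2 => isStrongLocMin_of_firstOrder_nonneg_secondOrder_pos hX.convex hxbar hf1 hf2
        hb2.1 hb2.2⟩,
    b2_iff_b3, IsStrongLocMin.isLocMin',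
    fun ha1 => a2_iff_a3.2 (ha1.firstOrder_secondOrder_nonneg hX.convex hf1 hf2), a2_iff_a3⟩

/-- Second-order optimality conditions for minimizing a locally Lipschitz,
twice semidifferentiable function over a polyhedron:
(b1) ⇔ (b2) ⇔ (b3) ⇒ (a1) ⇒ (a2) ⇔ (a3), where `f1 = f'(xbar;·)` and `f2 = f⁽²⁾(xbar;·)`. -/
theorem stmt1 {n : ℕ} (Ω X : Set (Fin n → ℝ)) (hΩ : IsOpen Ω) (hXΩ : X ⊆ Ω)
    (hX : IsPolyhedron X)
    (f : (Fin n → ℝ) → ℝ) (xbar : Fin n → ℝ) (hxbar : xbar ∈ X)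
    -- f is locally Lipschitz continuous near xbar
    (hLip : ∃ ε > (0:ℝ), ∃ K : ℝ, ∀ y z : Fin n → ℝ,
      n2 (y - xbar) < ε → n2 (z - xbar) < ε → |f y - f z| ≤ K * n2 (y - z))
    -- f is twice semidifferentiable at xbar, with f'(xbar;·) = f1 and f⁽²⁾(xbar;·) = f2
    (f1 f2 : (Fin n → ℝ) → ℝ)
    (hf1 : ∀ v, SemidiffLim f xbar v (f1 v))
    (hf2 : ∀ w, Semidiff2Lim f xbar f1 w (f2 w)) :
    let a1 := IsLocMin' f X xbar
    let a2 := (∀ v ∈ TangentCone X xbar, 0 ≤ f1 v) ∧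
      (∀ v ∈ TangentCone X xbar, f1 v = 0 → 0 ≤ f2 v)
    let a3 := (∀ x ∈ X, 0 ≤ f1 (x - xbar)) ∧
      (∀ x ∈ X, x ≠ xbar → f1 (x - xbar) = 0 → 0 ≤ f2 (x - xbar))
    let b1 := IsStrongLocMin f X xbar
    let b2 := (∀ v ∈ TangentCone X xbar, 0 ≤ f1 v) ∧
      (∀ v ∈ TangentCone X xbar, v ≠ 0 → f1 v = 0 → 0 < f2 v)
    let b3 := (∀ x ∈ X, 0 ≤ f1 (x - xbar)) ∧
      (∀ x ∈ X, x ≠ xbar → f1 (x - xbar) = 0 → 0 < f2 (x - xbar))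
    (b1 ↔ b2) ∧ (b2 ↔ b3) ∧ (b1 → a1) ∧ (a1 → a2) ∧ (a2 ↔ a3) :=
  stmt1_general X hX f xbar hxbar f1 f2 hf1 hf2
end
end

section
/- A closed set S ⊆ ℝⁿ is piecewise polyhedral (i.e., the union of finitely many polyhedra) if and only if the 1-norm distance function x ↦ dist₁(x;S) := min_{s∈S} ‖s − x‖₁ is a piecewise affine function on ℝⁿ. -/
open Filter Topology Set

noncomputable section

/-- The 1-norm on `Fin n → ℝ`. -/
def n1 {n : ℕ} (v : Fin n → ℝ) : ℝ := ∑ i, |v i|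

/-- A set is piecewise polyhedral if it is the union of finitely many polyhedra. -/
def IsPiecewisePolyhedral {n : ℕ} (S : Set (Fin n → ℝ)) : Prop :=
  ∃ (I : ℕ) (P : Fin I → Set (Fin n → ℝ)), (∀ i, IsPolyhedron (P i)) ∧ S = ⋃ i, P i

/-- A continuous function `g : ℝⁿ → ℝ` is piecewise affine: `ℝⁿ` is the union of finitely
many polyhedra on each of which `g` agrees with an affine function. -/
def IsPiecewiseAffine {n : ℕ} (g : (Fin n → ℝ) → ℝ) : Prop :=
  Continuous g ∧ ∃ (I : ℕ) (P : Fin I → Set (Fin n → ℝ))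
    (a : Fin I → Fin n → ℝ) (β : Fin I → ℝ),
    (∀ i, IsPolyhedron (P i)) ∧ (⋃ i, P i) = Set.univ ∧
    ∀ i, ∀ x ∈ P i, g x = (∑ j, a i j * x j) + β i

/-- The 1-norm distance function to a set `S`. -/
def dist1 {n : ℕ} (x : Fin n → ℝ) (S : Set (Fin n → ℝ)) : ℝ :=
  sInf ((fun s => n1 (s - x)) '' S)

/-!
For a polyhedron `P`, the epigraph of `dist₁(·; P)` is the projection of the polyhedron
`{(x, r, s) | s ∈ P, ‖s - x‖₁ ≤ r}` (the `ℓ¹` ball is cut out by the `2ⁿ` sign inequalities), so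
by Fourier–Motzkin elimination it is a polyhedron, and `dist₁(·; P)` is a maximum of finitely many
affine functions. For `S = ⋃ₖ Pₖ`, `dist₁(·; S) = minₖ dist₁(·; Pₖ)` is a min of maxes of affine
functions, which is affine on each of the polyhedral cells fixing which piece attains every max
and which `k` attains the min. Conversely, `S` is the zero set of `dist₁(·; S)`, and the zero set of
a piecewise affine function is the union of the polyhedra `C ∩ {a = 0}` over its pieces `(C, a)`.
-/

section HPolyhedron

variable {E F : Type*} [AddCommGroup E] [Module ℝ E] [AddCommGroup F] [Module ℝ F]

def IsHPolyhedron (S : Set E) : Prop :=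
  ∃ (ι : Type) (_ : Fintype ι) (f : ι → Module.Dual ℝ E) (b : ι → ℝ),
    S = {x | ∀ i, f i x ≤ b i}

theorem isHPolyhedron_setOf_le (f : Module.Dual ℝ E) (b : ℝ) : IsHPolyhedron {x | f x ≤ b} :=
  ⟨Unit, inferInstance, fun _ => f, fun _ => b, by simp⟩

theorem isHPolyhedron_setOf_affine_le (a a' : Module.Dual ℝ E) (β β' : ℝ) :
    IsHPolyhedron {x | a x + β ≤ a' x + β'} := by
  convert isHPolyhedron_setOf_le (a - a') (β' - β) using 1
  ext x
  simp only [mem_ofPred_eq, LinearMap.sub_apply]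
  constructor <;> intro h <;> linarith

theorem IsHPolyhedron.iInter {ι : Type} [Fintype ι] {S : ι → Set E}
    (hS : ∀ i, IsHPolyhedron (S i)) : IsHPolyhedron (⋂ i, S i) := by
  choose κ _ f b hfb using hS
  refine ⟨Σ i, κ i, inferInstance, fun p => f p.1 p.2, fun p => b p.1 p.2, ?_⟩
  ext x
  simp [hfb, Sigma.forall]

theorem IsHPolyhedron.inter {S T : Set E} (hS : IsHPolyhedron S) (hT : IsHPolyhedron T) :
    IsHPolyhedron (S ∩ T) := by
  rw [inter_eq_iInter]
  exact .iInter (Bool.forall_bool.2 ⟨hT, hS⟩)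

theorem IsHPolyhedron.preimage {S : Set E} (hS : IsHPolyhedron S) (g : F →ₗ[ℝ] E) :
    IsHPolyhedron (g ⁻¹' S) := by
  obtain ⟨ι, _, f, b, rfl⟩ := hS
  exact ⟨ι, inferInstance, fun i => f i ∘ₗ g, b, rfl⟩

theorem IsHPolyhedron.image_equiv {S : Set E} (hS : IsHPolyhedron S) (e : E ≃ₗ[ℝ] F) :
    IsHPolyhedron (e '' S) := by
  rw [e.image_eq_preimage_symm]
  exact hS.preimage e.symm.toLinearMap

theorem IsHPolyhedron.prod {S : Set E} {T : Set F} (hS : IsHPolyhedron S)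
    (hT : IsHPolyhedron T) : IsHPolyhedron (S ×ˢ T) :=
  (hS.preimage (LinearMap.fst ℝ E F)).inter (hT.preimage (LinearMap.snd ℝ E F))

theorem IsHPolyhedron.isClosed [TopologicalSpace E] [IsTopologicalAddGroup E]
    [ContinuousSMul ℝ E] [T2Space E] [FiniteDimensional ℝ E] {S : Set E}
    (hS : IsHPolyhedron S) : IsClosed S := by
  obtain ⟨ι, _, f, b, rfl⟩ := hS
  simp only [ofPred_forall]
  exact isClosed_iInter fun i => isClosed_le (f i).continuous_of_finiteDimensional continuous_const

theorem exists_mem_upperBounds_inter_lowerBounds {α : Type*} [ConditionallyCompleteLattice α]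
    {L U : Set α} (hL : BddAbove L) (hU : BddBelow U) (hLU : ∀ l ∈ L, ∀ u ∈ U, l ≤ u) :
    (upperBounds L ∩ lowerBounds U).Nonempty := by
  rcases L.eq_empty_or_nonempty with rfl | hLne
  · obtain ⟨y, hy⟩ := hU
    exact ⟨y, by simp, hy⟩
  · exact ⟨sSup L, fun l hl => le_csSup hL hl, fun u hu => csSup_le hLne fun l hl => hLU l hl u hu⟩

/-- One step of Fourier–Motzkin elimination. -/
theorem exists_forall_mul_le_iff {ι : Type*} [Finite ι] (c d : ι → ℝ) :
    (∃ y : ℝ, ∀ i, c i * y ≤ d i) ↔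
      (∀ i, c i = 0 → 0 ≤ d i) ∧ ∀ i j, 0 < c i → c j < 0 → c j * d i ≤ c i * d j := by
  constructor
  · rintro ⟨y, hy⟩
    refine ⟨fun i hi => by simpa [hi] using hy i, fun i j hi hj => ?_⟩
    nlinarith [mul_le_mul_of_nonpos_left (hy i) hj.le, mul_le_mul_of_nonneg_left (hy j) hi.le]
  · rintro ⟨hzero, hpos_neg⟩
    obtain ⟨y, hyL, hyU⟩ := exists_mem_upperBounds_inter_lowerBounds
      (Set.finite_range fun j : {j // c j < 0} => d j / c j).bddAbove
      (Set.finite_range fun i : {i // 0 < c i} => d i / c i).bddBelow (by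
        rintro _ ⟨⟨j, hj⟩, rfl⟩ _ ⟨⟨i, hi⟩, rfl⟩
        rw [div_le_iff_of_neg hj, div_mul_eq_mul_div, div_le_iff₀ hi]
        linarith [hpos_neg i j hi hj])
    refine ⟨y, fun i => ?_⟩
    rcases lt_trichotomy (c i) 0 with hi | hi | hi
    · have := hyL ⟨⟨i, hi⟩, rfl⟩
      rw [div_le_iff_of_neg hi] at this
      linarith
    · simpa [hi] using hzero i hi
    · have := hyU ⟨⟨i, hi⟩, rfl⟩
      rw [le_div_iff₀ hi] at this
      linarith

theorem dual_prod_apply (f : Module.Dual ℝ (E × ℝ)) (x : E) (y : ℝ) :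
    f (x, y) = (f ∘ₗ LinearMap.inl ℝ E ℝ) x + f (0, 1) * y := by
  have : ((x, y) : E × ℝ) = (x, 0) + y • (0, 1) := by simp
  rw [this, map_add, map_smul, smul_eq_mul, mul_comm]
  rfl

theorem IsHPolyhedron.image_fst_of_real {S : Set (E × ℝ)} (hS : IsHPolyhedron S) :
    IsHPolyhedron (Prod.fst '' S) := by
  obtain ⟨ι, _, f, b, rfl⟩ := hS
  set g := fun i => f i ∘ₗ LinearMap.inl ℝ E ℝ
  set c := fun i => f i (0, 1)
  have hf : ∀ i p, f i p = g i p.1 + c i * p.2 := fun i p => dual_prod_apply (f i) p.1 p.2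
  have hproj : Prod.fst '' {p : E × ℝ | ∀ i, f i p ≤ b i} =
      {x | ∀ i : {i // c i = 0}, g i x ≤ b i} ∩
        {x | ∀ ij : {i // 0 < c i} × {j // c j < 0},
          (c ij.1 • g ij.2 - c ij.2 • g ij.1) x ≤ c ij.1 * b ij.2 - c ij.2 * b ij.1} := by
    ext x
    have hfiber : x ∈ Prod.fst '' {p : E × ℝ | ∀ i, f i p ≤ b i} ↔
        ∃ y, ∀ i, c i * y ≤ b i - g i x := by
      simp only [mem_image, mem_ofPred_eq, Prod.exists, exists_and_right, exists_eq_right, hf,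
        le_sub_iff_add_le']
    rw [hfiber, exists_forall_mul_le_iff]
    simp only [mem_inter_iff, mem_ofPred_eq, Subtype.forall, Prod.forall, LinearMap.sub_apply,
      LinearMap.smul_apply, smul_eq_mul, sub_nonneg]
    constructor
    · rintro ⟨h0, h1⟩
      exact ⟨h0, fun i hi j hj => by linarith [h1 i j hi hj]⟩
    · rintro ⟨h0, h1⟩
      exact ⟨h0, fun i j hi hj => by linarith [h1 i hi j hj]⟩
  rw [hproj]
  exact IsHPolyhedron.inter ⟨_, inferInstance, _, _, rfl⟩ ⟨_, inferInstance, _, _, rfl⟩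

theorem IsHPolyhedron.image_fst_of_pi {k : ℕ} {S : Set (E × (Fin k → ℝ))}
    (hS : IsHPolyhedron S) : IsHPolyhedron (Prod.fst '' S) := by
  induction k with
  | zero =>
    convert hS.preimage (LinearMap.inl ℝ E (Fin 0 → ℝ)) using 1
    ext x
    refine ⟨?_, fun hx => ⟨_, hx, rfl⟩⟩
    rintro ⟨⟨x, v⟩, hv, rfl⟩
    rwa [Subsingleton.elim v 0] at hv
  | succ k ih =>
    let e : ((E × (Fin k → ℝ)) × ℝ) ≃ₗ[ℝ] E × (Fin (k + 1) → ℝ) :=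
      (LinearEquiv.prodAssoc ℝ E (Fin k → ℝ) ℝ).trans ((LinearEquiv.refl ℝ E).prodCongr
        ((LinearEquiv.prodComm ℝ (Fin k → ℝ) ℝ).trans (Fin.consLinearEquiv ℝ fun _ => ℝ)))
    convert ih (hS.preimage e.toLinearMap).image_fst_of_real using 1
    ext x
    constructor
    · rintro ⟨⟨x, v⟩, hv, rfl⟩
      refine ⟨(x, Fin.tail v), ⟨((x, Fin.tail v), v 0), ?_, rfl⟩, rfl⟩
      simpa [e, Fin.consLinearEquiv, Fin.consEquiv, Fin.cons_self_tail] using hv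
    · rintro ⟨_, ⟨⟨⟨x, v⟩, t⟩, hv, rfl⟩, rfl⟩
      exact ⟨_, hv, rfl⟩

theorem IsHPolyhedron.image_fst [FiniteDimensional ℝ F] {S : Set (E × F)}
    (hS : IsHPolyhedron S) : IsHPolyhedron (Prod.fst '' S) := by
  have := (hS.image_equiv ((LinearEquiv.refl ℝ E).prodCongr
    (Module.finBasis ℝ F).equivFun)).image_fst_of_pi
  rwa [image_image] at this

def IsMaxAffine (f : E → ℝ) : Prop :=
  ∃ (J : Type) (_ : Fintype J) (_ : Nonempty J) (a : J → Module.Dual ℝ E) (β : J → ℝ),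
    ∀ x, f x = Finset.univ.sup' Finset.univ_nonempty fun j => a j x + β j

theorem isMaxAffine_of_le_iff {ι : Type} [Fintype ι] {f : E → ℝ} (g : ι → Module.Dual ℝ E)
    (c b : ι → ℝ) (hf : ∀ x r, f x ≤ r ↔ ∀ i, g i x + c i * r ≤ b i) : IsMaxAffine f := by
  have hc : ∀ i, c i ≤ 0 := by
    intro i
    by_contra! hi
    have hr := (hf 0 (max (f 0) ((b i + 1) / c i))).1 (le_max_left _ _) i
    have hle := (div_le_iff₀ hi).1 (le_max_right (f 0) ((b i + 1) / c i))
    simp only [map_zero, zero_add] at hr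
    linarith
  have hJ : Nonempty {i // c i < 0} := by
    by_contra! hJ
    have hc0 : ∀ i, c i = 0 := fun i => (hc i).eq_of_not_lt fun hi => hJ.false ⟨i, hi⟩
    have := (hf 0 (f 0 - 1)).2 fun i => by simpa [hc0 i] using (hf 0 (f 0)).1 le_rfl i
    linarith
  refine ⟨{i // c i < 0}, inferInstance, hJ, fun j => (-c j)⁻¹ • g j, fun j => b j / c j,
    fun x => ?_⟩
  have hneg : ∀ j : {i // c i < 0}, ∀ r,
      g j x + c j * r ≤ b j ↔ ((-c j)⁻¹ • g j) x + b j / c j ≤ r := by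
    intro j r
    have := j.2
    rw [LinearMap.smul_apply, smul_eq_mul, ← div_eq_inv_mul, ← neg_div_neg_eq (b j),
      ← add_div, div_le_iff₀ (by linarith)]
    constructor <;> intro h <;> linarith
  apply le_antisymm
  · refine (hf x _).2 fun i => ?_
    rcases (hc i).lt_or_eq with hi | hi
    · exact (hneg ⟨i, hi⟩ _).2 (Finset.le_sup' (fun j : {i // c i < 0} =>
        ((-c j)⁻¹ • g j) x + b j / c j) (Finset.mem_univ ⟨i, hi⟩))
    · simpa [hi] using (hf x (f x)).1 le_rfl i
  · exact Finset.sup'_le _ _ fun j _ => (hneg j _).1 ((hf x (f x)).1 le_rfl j)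

theorem isMaxAffine_of_isHPolyhedron_epigraph {f : E → ℝ}
    (hf : IsHPolyhedron {p : E × ℝ | f p.1 ≤ p.2}) : IsMaxAffine f := by
  obtain ⟨ι, _, F, b, hF⟩ := hf
  refine isMaxAffine_of_le_iff (fun i => F i ∘ₗ LinearMap.inl ℝ E ℝ) (fun i => F i (0, 1)) b
    fun x r => ?_
  rw [show f x ≤ r ↔ (x, r) ∈ {p : E × ℝ | f p.1 ≤ p.2} from Iff.rfl, hF]
  exact forall_congr' fun i => by rw [dual_prod_apply]

def HasAffinePieces (f : E → ℝ) : Prop :=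
  ∃ (ι : Type) (_ : Fintype ι) (C : ι → Set E) (a : ι → Module.Dual ℝ E) (β : ι → ℝ),
    (∀ i, IsHPolyhedron (C i)) ∧ ⋃ i, C i = univ ∧ ∀ i, ∀ x ∈ C i, f x = a i x + β i

theorem hasAffinePieces_inf'_of_isMaxAffine {K : Type} [Fintype K] [Nonempty K]
    {f : K → E → ℝ} (hf : ∀ k, IsMaxAffine (f k)) :
    HasAffinePieces fun x => Finset.univ.inf' Finset.univ_nonempty fun k => f k x := by
  classical
  choose J _ _ a β hfab using hf
  let φ (k : K) (j : J k) (x : E) : ℝ := a k j x + β k j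
  /- On the cell of `(σ, k₀)`, the piece `σ k` attains the maximum defining `f k` and
  `k₀` attains the minimum over `k`. -/
  let cell (m : (∀ k, J k) × K) : Set E :=
    {x | (∀ k j, φ k j x ≤ φ k (m.1 k) x) ∧ ∀ k, φ m.2 (m.1 m.2) x ≤ φ k (m.1 k) x}
  refine ⟨(∀ k, J k) × K, inferInstance, cell, fun m => a m.2 (m.1 m.2),
    fun m => β m.2 (m.1 m.2), fun m => ?_, ?_, fun m x hx => ?_⟩
  · have : cell m = (⋂ k, ⋂ j, {x | φ k j x ≤ φ k (m.1 k) x}) ∩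
        ⋂ k, {x | φ m.2 (m.1 m.2) x ≤ φ k (m.1 k) x} := by
      ext x
      simp [cell]
    rw [this]
    exact .inter (.iInter fun k => .iInter fun j => isHPolyhedron_setOf_affine_le _ _ _ _)
      (.iInter fun k => isHPolyhedron_setOf_affine_le _ _ _ _)
  · refine eq_univ_of_forall fun x => mem_iUnion.2 ?_
    choose σ _ hσ using fun k => Finset.exists_mem_eq_sup' Finset.univ_nonempty (φ k · x)
    obtain ⟨k₀, -, hk₀⟩ := Finset.exists_mem_eq_inf' Finset.univ_nonempty fun k => φ k (σ k) x
    refine ⟨(σ, k₀), fun k j => ?_, fun k => ?_⟩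
    · exact (Finset.le_sup' (φ k · x) (Finset.mem_univ j)).trans (hσ k).le
    · exact hk₀.ge.trans (Finset.inf'_le _ (Finset.mem_univ k))
  · have hmax : ∀ k, f k x = φ k (m.1 k) x := fun k =>
      (hfab k x).trans (le_antisymm (Finset.sup'_le _ _ fun j _ => hx.1 k j)
        (Finset.le_sup' (φ k · x) (Finset.mem_univ _)))
    simp only [hmax]
    exact le_antisymm (Finset.inf'_le _ (Finset.mem_univ _))
      (Finset.le_inf' _ _ fun k _ => hx.2 k)

def IsPiecewiseHPolyhedral (S : Set E) : Prop :=
  ∃ (ι : Type) (_ : Fintype ι) (P : ι → Set E), (∀ i, IsHPolyhedron (P i)) ∧ S = ⋃ i, P i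

theorem HasAffinePieces.isPiecewiseHPolyhedral_setOf_eq_zero {f : E → ℝ}
    (hf : HasAffinePieces f) : IsPiecewiseHPolyhedral {x | f x = 0} := by
  obtain ⟨ι, _, C, a, β, hC, hcover, hfa⟩ := hf
  refine ⟨ι, inferInstance, fun i => C i ∩ ({x | a i x ≤ -β i} ∩ {x | (-a i) x ≤ β i}),
    fun i => (hC i).inter ((isHPolyhedron_setOf_le _ _).inter (isHPolyhedron_setOf_le _ _)), ?_⟩
  ext x
  simp only [mem_ofPred_eq, mem_iUnion, mem_inter_iff, LinearMap.neg_apply]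
  constructor
  · intro hx
    obtain ⟨i, hi⟩ := mem_iUnion.1 (hcover.ge (mem_univ x))
    have := hfa i x hi
    exact ⟨i, hi, by linarith, by linarith⟩
  · rintro ⟨i, hi, h₁, h₂⟩
    linarith [hfa i x hi]

end HPolyhedron

section Dist1

variable {n : ℕ}

theorem n1_le_iff_forall_sign (v : Fin n → ℝ) (r : ℝ) :
    n1 v ≤ r ↔ ∀ σ : Fin n → SignType, ∑ j, (σ j : ℝ) * v j ≤ r := by
  refine ⟨fun h σ => le_trans (Finset.sum_le_sum fun j _ => ?_) h, fun h => ?_⟩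
  · rcases σ j with _ | _ | _ <;> simp [le_abs_self, neg_le_abs, abs_nonneg]
  · simpa [n1, sign_mul_self] using h fun j => SignType.sign (v j)

theorem isHPolyhedron_epigraph_n1 : IsHPolyhedron {p : (Fin n → ℝ) × ℝ | n1 p.1 ≤ p.2} := by
  refine ⟨Fin n → SignType, inferInstance, fun σ =>
    dotProductEquiv ℝ (Fin n) (fun j => σ j) ∘ₗ LinearMap.fst ℝ _ ℝ - LinearMap.snd ℝ _ ℝ,
    fun _ => 0, ?_⟩
  ext p
  simp [n1_le_iff_forall_sign, dotProduct]

theorem n1_sub_eq_dist (x s : Fin n → ℝ) :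
    n1 (s - x) = dist (WithLp.toLp 1 x) (WithLp.toLp 1 s) := by
  simp [PiLp.dist_eq_of_L1, n1, Real.dist_eq, abs_sub_comm]

theorem dist1_eq_infDist (x : Fin n → ℝ) (S : Set (Fin n → ℝ)) :
    dist1 x S = Metric.infDist (WithLp.toLp 1 x) (WithLp.ofLp ⁻¹' S) := by
  have : (fun s => n1 (s - x)) '' S = dist (WithLp.toLp 1 x) '' (WithLp.ofLp ⁻¹' S) := by
    ext r
    simp only [mem_image, mem_preimage, n1_sub_eq_dist]
    exact ⟨fun ⟨s, hs, hr⟩ => ⟨_, hs, hr⟩, fun ⟨y, hy, hr⟩ => ⟨_, hy, hr⟩⟩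
  rw [dist1, this, Metric.infDist_eq_iInf, sInf_image']

theorem continuous_dist1 (S : Set (Fin n → ℝ)) : Continuous fun x => dist1 x S := by
  simp_rw [dist1_eq_infDist]
  exact Metric.continuous_infDist_pt _ |>.comp (PiLp.continuous_toLp 1 _)

theorem dist1_lt_iff {S : Set (Fin n → ℝ)} (hS : S.Nonempty) {x : Fin n → ℝ} {r : ℝ} :
    dist1 x S < r ↔ ∃ s ∈ S, n1 (s - x) < r := by
  obtain ⟨s, hs⟩ := hS
  rw [dist1_eq_infDist, Metric.infDist_lt_iff ⟨WithLp.toLp 1 s, hs⟩]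
  exact ⟨fun ⟨y, hy, hr⟩ => ⟨_, hy, by rwa [n1_sub_eq_dist]⟩,
    fun ⟨s, hs, hr⟩ => ⟨_, hs, by rwa [← n1_sub_eq_dist]⟩⟩

theorem dist1_le_iff {S : Set (Fin n → ℝ)} (hcl : IsClosed S) (hne : S.Nonempty)
    {x : Fin n → ℝ} {r : ℝ} : dist1 x S ≤ r ↔ ∃ s ∈ S, n1 (s - x) ≤ r := by
  refine ⟨fun hr => ?_, fun ⟨s, hs, hr⟩ => ?_⟩
  · obtain ⟨y, hy, hxy⟩ := (hcl.preimage (PiLp.continuous_ofLp 1 _)).exists_infDist_eq_dist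
      (hne.preimage (WithLp.ofLp_surjective 1)) (WithLp.toLp 1 x)
    refine ⟨_, hy, ?_⟩
    rwa [n1_sub_eq_dist, WithLp.toLp_ofLp, ← hxy, ← dist1_eq_infDist]
  · refine le_trans ?_ hr
    rw [dist1_eq_infDist, n1_sub_eq_dist]
    exact Metric.infDist_le_dist_of_mem hs

theorem dist1_eq_zero_iff {S : Set (Fin n → ℝ)} (hcl : IsClosed S) (hne : S.Nonempty)
    {x : Fin n → ℝ} : dist1 x S = 0 ↔ x ∈ S := by
  rw [dist1_eq_infDist, ← (hcl.preimage (PiLp.continuous_ofLp 1 _)).mem_iff_infDist_zero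
    (hne.preimage (WithLp.ofLp_surjective 1)), mem_preimage, WithLp.ofLp_toLp]

theorem dist1_iUnion {K : Type} [Fintype K] [Nonempty K] {P : K → Set (Fin n → ℝ)}
    (hP : ∀ k, (P k).Nonempty) (x : Fin n → ℝ) :
    dist1 x (⋃ k, P k) = Finset.univ.inf' Finset.univ_nonempty fun k => dist1 x (P k) := by
  refine eq_of_forall_gt_iff fun r => ?_
  obtain ⟨k⟩ := ‹Nonempty K›
  simp only [dist1_lt_iff ((hP k).mono (subset_iUnion P k)), Finset.inf'_lt_iff,
    Finset.mem_univ, true_and, dist1_lt_iff (hP _), mem_iUnion]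
  exact ⟨fun ⟨s, ⟨k, hs⟩, hr⟩ => ⟨k, s, hs, hr⟩, fun ⟨k, s, hs, hr⟩ => ⟨s, ⟨k, hs⟩, hr⟩⟩

theorem IsHPolyhedron.isMaxAffine_dist1 {P : Set (Fin n → ℝ)} (hP : IsHPolyhedron P)
    (hne : P.Nonempty) : IsMaxAffine fun x => dist1 x P := by
  apply isMaxAffine_of_isHPolyhedron_epigraph
  let xr := LinearMap.fst ℝ ((Fin n → ℝ) × ℝ) (Fin n → ℝ)
  let s := LinearMap.snd ℝ ((Fin n → ℝ) × ℝ) (Fin n → ℝ)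
  let L := s.prod ((s - LinearMap.fst ℝ _ ℝ ∘ₗ xr).prod (LinearMap.snd ℝ (Fin n → ℝ) ℝ ∘ₗ xr))
  have : {p : (Fin n → ℝ) × ℝ | dist1 p.1 P ≤ p.2} =
      Prod.fst '' (L ⁻¹' (P ×ˢ {p | n1 p.1 ≤ p.2})) := by
    ext ⟨x, r⟩
    simp [L, s, xr, dist1_le_iff hP.isClosed hne]
  rw [this]
  exact ((hP.prod isHPolyhedron_epigraph_n1).preimage L).image_fst

theorem IsPiecewiseHPolyhedral.hasAffinePieces_dist1 {S : Set (Fin n → ℝ)}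
    (hS : IsPiecewiseHPolyhedral S) (hne : S.Nonempty) : HasAffinePieces fun x => dist1 x S := by
  classical
  obtain ⟨ι, _, P, hP, rfl⟩ := hS
  let K := {i // (P i).Nonempty}
  obtain ⟨x, hx⟩ := hne
  obtain ⟨i, hi⟩ := mem_iUnion.1 hx
  have : Nonempty K := ⟨⟨i, x, hi⟩⟩
  have hK : ⋃ i, P i = ⋃ k : K, P k := by
    ext y
    simp only [mem_iUnion]
    exact ⟨fun ⟨i, hy⟩ => ⟨⟨i, y, hy⟩, hy⟩, fun ⟨k, hy⟩ => ⟨k, hy⟩⟩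
  rw [hK]
  simp_rw [dist1_iUnion (fun k : K => k.2)]
  exact hasAffinePieces_inf'_of_isMaxAffine fun k => (hP k).isMaxAffine_dist1 k.2

theorem dual_apply_eq_sum (f : Module.Dual ℝ (Fin n → ℝ)) (x : Fin n → ℝ) :
    f x = ∑ j, (dotProductEquiv ℝ (Fin n)).symm f j * x j := by
  conv_lhs => rw [← (dotProductEquiv ℝ (Fin n)).apply_symm_apply f]
  rfl

theorem isPolyhedron_iff_isHPolyhedron {S : Set (Fin n → ℝ)} : IsPolyhedron S ↔ IsHPolyhedron S := by
  constructor
  · rintro ⟨m, A, b, rfl⟩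
    exact ⟨Fin m, inferInstance, fun i => dotProductEquiv ℝ (Fin n) (A i), b, rfl⟩
  · rintro ⟨ι, _, f, b, rfl⟩
    let e := (Fintype.equivFin ι).symm
    refine ⟨Fintype.card ι, fun i => (dotProductEquiv ℝ (Fin n)).symm (f (e i)),
      fun i => b (e i), ?_⟩
    ext x
    simp only [mem_ofPred_eq, ← dual_apply_eq_sum]
    exact e.forall_congr_right.symm

theorem isPiecewisePolyhedral_iff_isPiecewiseHPolyhedral {S : Set (Fin n → ℝ)} :
    IsPiecewisePolyhedral S ↔ IsPiecewiseHPolyhedral S := by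
  simp_rw [IsPiecewisePolyhedral, IsPiecewiseHPolyhedral, isPolyhedron_iff_isHPolyhedron]
  constructor
  · rintro ⟨I, P, hP, rfl⟩
    exact ⟨Fin I, inferInstance, P, hP, rfl⟩
  · rintro ⟨ι, _, P, hP, rfl⟩
    let e := (Fintype.equivFin ι).symm
    exact ⟨_, P ∘ e, fun i => hP (e i), (e.surjective.iUnion_comp P).symm⟩

theorem isPiecewiseAffine_iff_continuous_and_hasAffinePieces {g : (Fin n → ℝ) → ℝ} :
    IsPiecewiseAffine g ↔ Continuous g ∧ HasAffinePieces g := by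
  simp_rw [IsPiecewiseAffine, HasAffinePieces, isPolyhedron_iff_isHPolyhedron]
  refine and_congr_right fun _ => ⟨?_, ?_⟩
  · rintro ⟨I, P, a, β, hP, hcover, hg⟩
    exact ⟨Fin I, inferInstance, P, fun i => dotProductEquiv ℝ (Fin n) (a i), β, hP, hcover, hg⟩
  · rintro ⟨ι, _, C, a, β, hC, hcover, hg⟩
    let e := (Fintype.equivFin ι).symm
    refine ⟨_, C ∘ e, fun i => (dotProductEquiv ℝ (Fin n)).symm (a (e i)), β ∘ e,
      fun i => hC (e i), (e.surjective.iUnion_comp C).trans hcover, fun i x hx => ?_⟩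
    rw [hg _ x hx, dual_apply_eq_sum]
    rfl

end Dist1

/-- A closed (nonempty) set `S ⊆ ℝⁿ` is piecewise polyhedral if and only
if the 1-norm distance function `x ↦ dist₁(x;S)` is piecewise affine on `ℝⁿ`. -/
theorem stmt4 {n : ℕ} (S : Set (Fin n → ℝ)) (hcl : IsClosed S) (hne : S.Nonempty) :
    IsPiecewisePolyhedral S ↔ IsPiecewiseAffine (fun x => dist1 x S) := by
  rw [isPiecewisePolyhedral_iff_isPiecewiseHPolyhedral, isPiecewiseAffine_iff_continuous_and_hasAffinePieces]
  refine ⟨fun hS => ⟨continuous_dist1 S, hS.hasAffinePieces_dist1 hne⟩, fun ⟨_, hpieces⟩ => ?_⟩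
  simpa only [dist1_eq_zero_iff hcl hne, ofPred_mem_eq] using
    hpieces.isPiecewiseHPolyhedral_setOf_eq_zero
end
end

section
/- Let Q ∈ ℝⁿˣⁿ be symmetric and define f(x) := ½[ max(‖x‖₂², 1) − xᵀQx ] for x ∈ ℝⁿ. Let x̄ ∈ ℝⁿ with ‖x̄‖₂ = 1. Then x̄ is an unconstrained directional stationary point of f, i.e., f'(x̄;d) ≥ 0 for all d ∈ ℝⁿ, if and only if x̄ is an eigenvector of Q corresponding to an eigenvalue β ∈ [0,1] (i.e., Qx̄ = βx̄ for some β ∈ [0,1]). -/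
open Filter Topology Set

noncomputable section

def HasDirDeriv {n : ℕ} (f : (Fin n → ℝ) → ℝ) (x v : Fin n → ℝ) (d : ℝ) : Prop :=
  Tendsto (fun τ : ℝ => (f (x + τ • v) - f x) / τ) (𝓝[>] 0) (𝓝 d)

lemma dirDeriv_aux {n : ℕ} (Q : Matrix (Fin n) (Fin n) ℝ) (hQ : ∀ i j, Q i j = Q j i)
    (f : (Fin n → ℝ) → ℝ)
    (hf : ∀ x, f x = (1/2) * (max (∑ i, x i ^ 2) 1 - ∑ i, ∑ j, Q i j * x i * x j))
    (xbar : Fin n → ℝ) (hxbar : ∑ i, xbar i ^ 2 = 1) (d : Fin n → ℝ) :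
    HasDirDeriv f xbar d
      ((1/2) * (max (2 * ∑ i, xbar i * d i) 0 - 2 * ∑ i, ∑ j, Q i j * xbar i * d j)) := by
  set s : ℝ := ∑ i, xbar i * d i with hs
  set N : ℝ := ∑ i, d i ^ 2 with hN
  set a : ℝ := ∑ i, ∑ j, Q i j * xbar i * d j with ha
  set b : ℝ := ∑ i, ∑ j, Q i j * d i * d j with hb
  set c : ℝ := ∑ i, ∑ j, Q i j * xbar i * xbar j with hc
  have key : ∀ τ : ℝ, 0 < τ →
      (f (xbar + τ • d) - f xbar) / τ = (1/2) * (max (2*s + τ*N) 0 - 2*a - τ*b) := by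
    intro τ hτ
    have e1 : ∑ i, ((xbar + τ • d) i) ^ 2 = 1 + τ * (2*s + τ*N) := by
      have h : ∀ i ∈ Finset.univ, ((xbar + τ • d) i) ^ 2
          = xbar i ^ 2 + τ * (2 * (xbar i * d i)) + τ * (τ * d i ^ 2) := by
        intro i _; simp only [Pi.add_apply, Pi.smul_apply, smul_eq_mul]; ring
      rw [Finset.sum_congr rfl h]
      simp only [Finset.sum_add_distrib, ← Finset.mul_sum]
      rw [hxbar, hs, hN]; ring
    have ea : ∑ i, ∑ j, Q i j * d i * xbar j = a := by
      rw [ha, Finset.sum_comm]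
      apply Finset.sum_congr rfl; intro i _
      apply Finset.sum_congr rfl; intro j _
      rw [hQ j i]; ring
    have e2 : ∑ i, ∑ j, Q i j * ((xbar + τ • d) i) * ((xbar + τ • d) j)
        = c + τ * (2*a + τ*b) := by
      have h : ∀ i ∈ Finset.univ, ∀ j ∈ Finset.univ,
          Q i j * ((xbar + τ • d) i) * ((xbar + τ • d) j)
          = Q i j * xbar i * xbar j + τ * (Q i j * xbar i * d j)
            + τ * (Q i j * d i * xbar j) + τ * (τ * (Q i j * d i * d j)) := by
        intro i _ j _; simp only [Pi.add_apply, Pi.smul_apply, smul_eq_mul]; ring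
      rw [Finset.sum_congr rfl (fun i hi => Finset.sum_congr rfl (h i hi))]
      simp only [Finset.sum_add_distrib, ← Finset.mul_sum]
      rw [ea, ← hc, ← ha, ← hb]; ring
    rw [hf, hf, e1, e2, hxbar, ← hc]
    have emax : max (1 + τ * (2*s + τ*N)) 1 = 1 + τ * max (2*s + τ*N) 0 := by
      have h1 : max (1 + τ * (2*s + τ*N)) 1 = 1 + max (τ * (2*s + τ*N)) 0 := by
        rw [← max_add_add_left 1 (τ * (2*s + τ*N)) 0, add_zero]
      rw [h1]
      rcases le_or_gt 0 (2*s + τ*N) with h | h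
      · rw [max_eq_left (by positivity), max_eq_left h]
      · rw [max_eq_right, max_eq_right h.le, mul_zero]
        exact mul_nonpos_iff.mpr (Or.inl ⟨hτ.le, h.le⟩)
    rw [emax, max_eq_right (le_refl (1:ℝ))]
    field_simp
    ring
  have hcont : Tendsto (fun τ : ℝ => (1/2) * (max (2*s + τ*N) 0 - 2*a - τ*b)) (𝓝[>] (0:ℝ))
      (𝓝 ((1/2) * (max (2*s) 0 - 2*a))) := by
    have hC : Continuous (fun τ : ℝ => (1/2) * (max (2*s + τ*N) 0 - 2*a - τ*b)) := by
      continuity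
    have h0 := (hC.tendsto 0).mono_left (nhdsWithin_le_nhds (s := Set.Ioi (0:ℝ)))
    simpa only [zero_mul, add_zero, sub_zero] using h0
  apply hcont.congr'
  filter_upwards [self_mem_nhdsWithin] with τ (hτ : 0 < τ)
  exact (key τ hτ).symm

/-- For `f(x) = ½[max(‖x‖₂²,1) − xᵀQx]` and `‖xbar‖₂ = 1`:
`xbar` is an unconstrained directional stationary point of `f` iff `xbar` is an eigenvector
of `Q` with an eigenvalue `β ∈ [0,1]`. -/
theorem stmt16 {n : ℕ} (Q : Matrix (Fin n) (Fin n) ℝ) (hQ : ∀ i j, Q i j = Q j i)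
    (f : (Fin n → ℝ) → ℝ)
    (hf : ∀ x, f x = (1/2) * (max (∑ i, x i ^ 2) 1 - ∑ i, ∑ j, Q i j * x i * x j))
    (xbar : Fin n → ℝ) (hxbar : ∑ i, xbar i ^ 2 = 1) :
    (∀ d : Fin n → ℝ, ∃ fd, HasDirDeriv f xbar d fd ∧ 0 ≤ fd) ↔
    (∃ β : ℝ, β ∈ Set.Icc (0:ℝ) 1 ∧ ∀ i, (∑ j, Q i j * xbar j) = β * xbar i) := by
  have deriv := dirDeriv_aux Q hQ f hf xbar hxbar
  constructor
  · intro h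
    have hval : ∀ d : Fin n → ℝ,
        0 ≤ (1/2) * (max (2 * ∑ i, xbar i * d i) 0 - 2 * ∑ i, ∑ j, Q i j * xbar i * d j) := by
      intro d
      obtain ⟨fd, hfd, hfd0⟩ := h d
      have heq := tendsto_nhds_unique hfd (deriv d)
      exact heq ▸ hfd0
    set β : ℝ := ∑ i, ∑ j, Q i j * xbar i * xbar j with hβ
    have ha_eq : ∀ d : Fin n → ℝ, ∑ i, ∑ j, Q i j * xbar i * d j
        = ∑ j, (∑ i, Q j i * xbar i) * d j := by
      intro d
      rw [Finset.sum_comm]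
      apply Finset.sum_congr rfl; intro j _
      rw [Finset.sum_mul]
      apply Finset.sum_congr rfl; intro i _
      rw [hQ i j]
    set v : Fin n → ℝ := fun i => (∑ j, Q i j * xbar j) - β * xbar i with hv
    have hQx : ∀ j, ∑ i, Q j i * xbar i = v j + β * xbar j := by
      intro j; simp [hv]
    have hsv : ∑ i, xbar i * v i = 0 := by
      have h1 : ∑ i, xbar i * v i
          = (∑ i, ∑ j, Q i j * xbar i * xbar j) - β * ∑ i, xbar i ^ 2 := by
        simp only [hv, mul_sub, Finset.sum_sub_distrib, Finset.mul_sum]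
        congr 1
        · apply Finset.sum_congr rfl; intro i _
          apply Finset.sum_congr rfl; intro j _; ring
        · apply Finset.sum_congr rfl; intro i _; ring
      rw [h1, hxbar, ← hβ]; ring
    have hav : ∑ i, ∑ j, Q i j * xbar i * v j = ∑ j, v j ^ 2 := by
      rw [ha_eq v]
      have h2 : ∀ j ∈ Finset.univ, (∑ i, Q j i * xbar i) * v j
          = v j ^ 2 + β * (xbar j * v j) := by
        intro j _; rw [hQx j]; ring
      rw [Finset.sum_congr rfl h2, Finset.sum_add_distrib, ← Finset.mul_sum, hsv]
      ring
    have hveq : ∀ i, v i = 0 := by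
      have h3 := hval v
      rw [hsv, hav] at h3
      have h4 : ∑ j, v j ^ 2 ≤ 0 := by
        simp only [mul_zero, max_self] at h3; linarith
      have h5 : ∑ j, v j ^ 2 = 0 :=
        le_antisymm h4 (Finset.sum_nonneg fun j _ => sq_nonneg (v j))
      intro i
      have := (Finset.sum_eq_zero_iff_of_nonneg (fun j _ => sq_nonneg (v j))).mp h5 i
        (Finset.mem_univ i)
      exact pow_eq_zero_iff (two_ne_zero) |>.mp this
    have heig : ∀ i, (∑ j, Q i j * xbar j) = β * xbar i := by
      intro i
      have := hveq i
      simp only [hv] at this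
      linarith
    -- β bounds
    have hsx : ∑ i, xbar i * xbar i = 1 := by
      rw [← hxbar]; apply Finset.sum_congr rfl; intro i _; ring
    have hax : ∑ i, ∑ j, Q i j * xbar i * xbar j = β := hβ.symm
    have hβ1 : β ≤ 1 := by
      have := hval xbar
      rw [hsx, hax] at this
      have : (0:ℝ) ≤ max 2 0 - 2*β := by linarith
      rw [max_eq_left (by norm_num)] at this
      linarith
    have hβ0 : 0 ≤ β := by
      have h6 := hval (fun i => -xbar i)
      have e1 : ∑ i, xbar i * (fun i => -xbar i) i = -1 := by
        simp only
        have : ∑ i, xbar i * -xbar i = -∑ i, xbar i * xbar i := by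
          rw [← Finset.sum_neg_distrib]
          apply Finset.sum_congr rfl; intro i _; ring
        rw [this, hsx]
      have e2 : ∑ i, ∑ j, Q i j * xbar i * (fun i => -xbar i) j = -β := by
        simp only
        have : ∑ i, ∑ j, Q i j * xbar i * -xbar j
            = -∑ i, ∑ j, Q i j * xbar i * xbar j := by
          rw [← Finset.sum_neg_distrib]
          apply Finset.sum_congr rfl; intro i _
          rw [← Finset.sum_neg_distrib]
          apply Finset.sum_congr rfl; intro j _; ring
        rw [this, hax]
      rw [e1, e2] at h6
      have : (0:ℝ) ≤ max (-2) 0 + 2*β := by linarith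
      rw [max_eq_right (by norm_num)] at this
      linarith
    exact ⟨β, ⟨hβ0, hβ1⟩, heig⟩
  · rintro ⟨β, hβmem, hβeig⟩ d
    refine ⟨_, deriv d, ?_⟩
    have ha : ∑ i, ∑ j, Q i j * xbar i * d j = β * ∑ i, xbar i * d i := by
      rw [Finset.sum_comm, Finset.mul_sum]
      apply Finset.sum_congr rfl; intro j _
      have h7 : ∑ i, Q i j * xbar i * d j = (∑ i, Q j i * xbar i) * d j := by
        rw [Finset.sum_mul]; apply Finset.sum_congr rfl; intro i _; rw [hQ i j]
      rw [h7, hβeig j]; ring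
    rw [ha]
    obtain ⟨hβ0, hβ1⟩ := hβmem
    set t : ℝ := ∑ i, xbar i * d i
    rcases le_or_gt 0 t with ht | ht
    · rw [max_eq_left (by linarith)]; nlinarith
    · rw [max_eq_right (by linarith)]; nlinarith
end
end

section
/- Let Q ∈ ℝⁿˣⁿ be symmetric and let b, α ∈ ℝⁿ satisfy |b_i| ≤ α_i for all i. Define the index sets I₊ := {i : −b_i = α_i > 0}, I₋ := {i : b_i = α_i > 0}, I_f := {i : b_i = α_i = 0}, and I_{≠0} := I₊ ∪ I₋. Then the homogeneous program minimize ½vᵀQv subject to bᵀv + ∑_i α_i|v_i| ≤ 0 has optimal value zero (equivalently, vᵀQv ≥ 0 for every feasible v) if and only if the following three conditions hold: (i) the principal submatrix Q_{I_f I_f} is positive semidefinite, with eigen-decomposition Pᵀ Q_{I_f I_f} P = Ξ where P is orthogonal and Ξ = diag(Ξ⁺, 0) with Ξ⁺ a diagonal matrix of the positive eigenvalues; write P = [P⁺, P⁰] for the corresponding column blocks; (ii) the matrix [Q_{I₊ I_f}; Q_{I₋ I_f}] · P⁰ = 0; (iii) the Schur complement [[Q_{I₊I₊}, −Q_{I₊I₋}],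 [−Q_{I₋I₊}, Q_{I₋I₋}]] − [Q_{I₊I_f}P⁺; −Q_{I₋I_f}P⁺] (Ξ⁺)⁻¹ [Q_{I₊I_f}P⁺; −Q_{I₋I_f}P⁺]ᵀ is copositive on the nonnegative orthant ℝ₊^{|I_{≠0}|}. -/
/-!
Since `|bᵢ| ≤ αᵢ`, every term `bᵢvᵢ + αᵢ|vᵢ|` is nonnegative, so the feasible set is the cone of
vectors supported on `I₊ ∪ I₋ ∪ I_f` whose coordinates are `≥ 0` on `I₊` and `≤ 0` on `I₋`.
Write a feasible vector as `(σ ⊙ u, P z)` with `u ≥ 0`, `σ = ±1` the sign pattern and `P` the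
orthogonal matrix diagonalising `Q_{I_f I_f}`. With `x = σ ⊙ u` and `c = Pᵀ Q_{I_f I≠0} x` the
quadratic form becomes `xᵀ Q_{I≠0 I≠0} x + 2 cᵀz + ∑ ξₖ zₖ²`. This is nonnegative for all `z` iff
`ξ ≥ 0`, `cₖ = 0` whenever `ξₖ = 0`, and its minimum `xᵀ Q_{I≠0 I≠0} x - ∑ cₖ² / ξₖ` (the Schur
complement form) is nonnegative. Letting `u` range over the unit vectors turns the middle
condition into `Q_{I≠0 I_f} P⁰ = 0`.
-/

open Finset Matrix

section ExtendByZero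

variable {ι R : Type*} [CommSemiring R] {p q : ι → Prop} [DecidablePred p] [DecidablePred q]

def extendByZero (p : ι → Prop) [DecidablePred p] (x : {i // p i} → R) : ι → R :=
  fun i => if h : p i then x ⟨i, h⟩ else 0

lemma extendByZero_apply (x : {i // p i} → R) {i : ι} (hi : p i) :
    extendByZero p x i = x ⟨i, hi⟩ :=
  dif_pos hi

lemma extendByZero_apply_of_not (x : {i // p i} → R) {i : ι} (hi : ¬ p i) :
    extendByZero p x i = 0 :=
  dif_neg hi

lemma extendByZero_dotProduct [Fintype ι] (x : {i // p i} → R) (y : ι → R) :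
    extendByZero p x ⬝ᵥ y = x ⬝ᵥ fun i => y i := by
  rw [dotProduct, ← Fintype.sum_subtype_add_sum_subtype p]
  simp [dotProduct, extendByZero_apply _ (Subtype.prop _),
    fun i : {i // ¬ p i} => extendByZero_apply_of_not x i.2]

lemma extendByZero_dotProduct_mulVec_extendByZero [Fintype ι] (M : Matrix ι ι R)
    (x : {i // p i} → R) (y : {i // q i} → R) :
    extendByZero p x ⬝ᵥ (M *ᵥ extendByZero q y) =
      x ⬝ᵥ (M.submatrix Subtype.val Subtype.val *ᵥ y) := by
  rw [extendByZero_dotProduct]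
  congr 1
  ext i
  rw [mulVec, dotProduct_comm, extendByZero_dotProduct]
  simp only [mulVec, submatrix_apply, dotProduct_comm]

end ExtendByZero

lemma Matrix.IsSymm.add_dotProduct_mulVec_add {ι R : Type*} [Fintype ι] [CommRing R]
    {M : Matrix ι ι R} (hM : M.IsSymm) (v w : ι → R) :
    (v + w) ⬝ᵥ (M *ᵥ (v + w)) = v ⬝ᵥ (M *ᵥ v) + 2 * (v ⬝ᵥ (M *ᵥ w)) + w ⬝ᵥ (M *ᵥ w) := by
  have hwv : w ⬝ᵥ (M *ᵥ v) = v ⬝ᵥ (M *ᵥ w) := by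
    rw [dotProduct_mulVec, ← mulVec_transpose, hM.eq, dotProduct_comm]
  rw [mulVec_add, add_dotProduct, dotProduct_add, dotProduct_add, hwv]
  ring

lemma sum_sum_mul_mul_eq_dotProduct_mulVec {ι : Type*} [Fintype ι] (Q : Matrix ι ι ℝ)
    (v : ι → ℝ) : ∑ i, ∑ j, Q i j * v i * v j = v ⬝ᵥ (Q *ᵥ v) := by
  simp only [dotProduct, mulVec, Finset.mul_sum]
  exact Finset.sum_congr rfl fun i _ => Finset.sum_congr rfl fun j _ => by ring

lemma mul_add_mul_abs_nonneg {β a : ℝ} (h : |β| ≤ a) (v : ℝ) : 0 ≤ β * v + a * |v| := by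
  have : |β * v| ≤ a * |v| := by
    rw [abs_mul]; exact mul_le_mul_of_nonneg_right h (abs_nonneg v)
  linarith [neg_abs_le (β * v)]

lemma eq_zero_of_mul_add_mul_abs_eq_zero {β a v : ℝ} (h : |β| < a) (hv : β * v + a * |v| = 0) :
    v = 0 := by
  have : |β * v| ≤ |β| * |v| := (abs_mul β v).le
  have : (a - |β|) * |v| ≤ 0 := by linarith [neg_abs_le (β * v)]
  exact abs_eq_zero.mp (le_antisymm (nonpos_of_mul_nonpos_right this (by linarith)) (abs_nonneg v))

section FeasibleCone

variable {ι : Type*} (b α : ι → ℝ)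

-- `I₊ ∪ I₋` and `I_f` of the paper.
abbrev IsSignedIndex (i : ι) : Prop := (-b i = α i ∨ b i = α i) ∧ 0 < α i

abbrev IsFreeIndex (i : ι) : Prop := b i = 0 ∧ α i = 0

-- `+1` on `I₊` and `-1` on `I₋`: the sign of feasible points at that coordinate.
noncomputable def constraintSign (i : {i // IsSignedIndex b α i}) : ℝ :=
  if -b i = α i then 1 else -1

variable {b α}

lemma constraintSign_mul_self (i : {i // IsSignedIndex b α i}) :
    constraintSign b α i * constraintSign b α i = 1 := by
  unfold constraintSign; split_ifs <;> norm_num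

lemma abs_constraintSign (i : {i // IsSignedIndex b α i}) : |constraintSign b α i| = 1 := by
  unfold constraintSign; split_ifs <;> norm_num

lemma mul_constraintSign (i : {i // IsSignedIndex b α i}) :
    b i * constraintSign b α i = -α i := by
  unfold constraintSign
  split_ifs with h
  · linarith
  · rw [i.2.1.resolve_left h]; ring

lemma not_isFreeIndex_of_isSignedIndex {i : ι} (hi : IsSignedIndex b α i) :
    ¬ IsFreeIndex b α i :=
  fun hf => hi.2.ne' hf.2

lemma abs_lt_of_not_isSignedIndex_of_not_isFreeIndex {i : ι} (h : |b i| ≤ α i)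
    (hs : ¬ IsSignedIndex b α i) (hf : ¬ IsFreeIndex b α i) : |b i| < α i := by
  refine h.lt_of_ne fun heq => ?_
  have hb : b i = α i ∨ b i = -α i := (abs_eq ((abs_nonneg _).trans h)).mp heq
  rcases (heq ▸ abs_nonneg (b i) : 0 ≤ α i).eq_or_lt with h0 | hpos
  · exact hf ⟨abs_eq_zero.mp (heq.trans h0.symm), h0.symm⟩
  · exact hs ⟨hb.symm.imp (fun h : b i = -α i => by rw [h, neg_neg]) id, hpos⟩

lemma mul_add_mul_abs_eq_zero_iff (i : {i // IsSignedIndex b α i}) (v : ℝ) :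
    b i * v + α i * |v| = 0 ↔ 0 ≤ constraintSign b α i * v := by
  set s := constraintSign b α i
  have key : b i * v + α i * |v| = α i * (|s * v| - s * v) := by
    rw [abs_mul, abs_constraintSign, one_mul]
    linear_combination (s * v) * mul_constraintSign i - (b i * v) * constraintSign_mul_self i
  rw [key, mul_eq_zero, sub_eq_zero, abs_eq_self, or_iff_right i.2.2.ne']

lemma feasible_iff_forall_mul_add_mul_abs_eq_zero [Fintype ι] (h : ∀ i, |b i| ≤ α i)
    (v : ι → ℝ) :
    (∑ i, b i * v i) + (∑ i, α i * |v i|) ≤ 0 ↔ ∀ i, b i * v i + α i * |v i| = 0 := by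
  have hnonneg : 0 ≤ fun i => b i * v i + α i * |v i| :=
    fun i => mul_add_mul_abs_nonneg (h i) (v i)
  rw [← Finset.sum_add_distrib]
  refine ⟨fun hle => congrFun ?_, fun h0 => (Finset.sum_eq_zero fun i _ => h0 i).le⟩
  exact (Fintype.sum_eq_zero_iff_of_nonneg hnonneg).mp
    (le_antisymm hle (Fintype.sum_nonneg hnonneg))

theorem feasible_iff_exists_extendByZero [Fintype ι] (h : ∀ i, |b i| ≤ α i) (v : ι → ℝ) :
    (∑ i, b i * v i) + (∑ i, α i * |v i|) ≤ 0 ↔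
      ∃ u : {i // IsSignedIndex b α i} → ℝ, 0 ≤ u ∧ ∃ w : {i // IsFreeIndex b α i} → ℝ,
        v = extendByZero _ (constraintSign b α * u) + extendByZero _ w := by
  rw [feasible_iff_forall_mul_add_mul_abs_eq_zero h]
  constructor
  · intro hv
    refine ⟨fun i => constraintSign b α i * v i,
      fun i => (mul_add_mul_abs_eq_zero_iff i _).mp (hv i), fun i => v i, funext fun i => ?_⟩
    rw [Pi.add_apply]
    by_cases hs : IsSignedIndex b α i
    · rw [extendByZero_apply _ hs,
        extendByZero_apply_of_not _ (not_isFreeIndex_of_isSignedIndex hs), Pi.mul_apply,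
        ← mul_assoc, constraintSign_mul_self, one_mul, add_zero]
    by_cases hf : IsFreeIndex b α i
    · rw [extendByZero_apply_of_not _ hs, extendByZero_apply _ hf, zero_add]
    · rw [extendByZero_apply_of_not _ hs, extendByZero_apply_of_not _ hf, add_zero]
      exact eq_zero_of_mul_add_mul_abs_eq_zero
        (abs_lt_of_not_isSignedIndex_of_not_isFreeIndex (h i) hs hf) (hv i)
  · rintro ⟨u, hu, w, rfl⟩ i
    rw [Pi.add_apply]
    by_cases hs : IsSignedIndex b α i
    · rw [extendByZero_apply _ hs,
        extendByZero_apply_of_not _ (not_isFreeIndex_of_isSignedIndex hs), add_zero,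
        mul_add_mul_abs_eq_zero_iff ⟨i, hs⟩, Pi.mul_apply, ← mul_assoc, constraintSign_mul_self,
        one_mul]
      exact hu _
    by_cases hf : IsFreeIndex b α i
    · rw [hf.1, hf.2]; ring
    · rw [extendByZero_apply_of_not _ hs, extendByZero_apply_of_not _ hf]; simp

end FeasibleCone

lemma nonneg_and_eq_zero_of_forall_quadratic_nonneg {a ξ c : ℝ}
    (h : ∀ t, 0 ≤ a + (ξ * t ^ 2 + 2 * c * t)) : 0 ≤ ξ ∧ (ξ = 0 → c = 0) := by
  have hdisc : discrim ξ (2 * c) a ≤ 0 := discrim_le_zero fun t => by linarith [h t]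
  rw [discrim] at hdisc
  have h0 := h 0
  have h1 := h 1
  have h2 := h (-1)
  norm_num at h0 h1 h2
  refine ⟨?_, fun hξ => ?_⟩
  · by_contra! hneg
    nlinarith [mul_neg_of_neg_of_pos hneg (show 0 < a by linarith)]
  · subst hξ
    nlinarith

lemma neg_sq_div_le_quadratic {ξ c : ℝ} (hξ : 0 ≤ ξ) (hc : ξ = 0 → c = 0) (t : ℝ) :
    -(c ^ 2 / ξ) ≤ ξ * t ^ 2 + 2 * c * t := by
  rcases hξ.eq_or_lt with h0 | hpos
  · simp [← h0, hc h0.symm]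
  · have : ξ * (ξ * t ^ 2 + 2 * c * t + c ^ 2 / ξ) = (ξ * t + c) ^ 2 := by
      field_simp; ring
    have : 0 ≤ ξ * t ^ 2 + 2 * c * t + c ^ 2 / ξ :=
      nonneg_of_mul_nonneg_right (this ▸ sq_nonneg _) hpos
    linarith

-- For `ξ = 0` both sides vanish, since `c / 0 = 0`.
lemma quadratic_neg_div (ξ c : ℝ) : ξ * (-c / ξ) ^ 2 + 2 * c * (-c / ξ) = -(c ^ 2 / ξ) := by
  rcases eq_or_ne ξ 0 with h0 | hne
  · simp [h0]
  · field_simp; ring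

theorem forall_quadratic_nonneg_iff {κ : Type*} [Fintype κ] [DecidableEq κ] (a : ℝ) (ξ c : κ → ℝ) :
    (∀ z, 0 ≤ a + 2 * (c ⬝ᵥ z) + z ⬝ᵥ (diagonal ξ *ᵥ z)) ↔
      (∀ k, 0 ≤ ξ k) ∧ (∀ k, ξ k = 0 → c k = 0) ∧ ∑ k, c k ^ 2 / ξ k ≤ a := by
  have hsum : ∀ z, a + 2 * (c ⬝ᵥ z) + z ⬝ᵥ (diagonal ξ *ᵥ z) =
      a + ∑ k, (ξ k * z k ^ 2 + 2 * c k * z k) := fun z => by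
    simp only [dotProduct, mulVec_diagonal, Finset.mul_sum, add_assoc, ← Finset.sum_add_distrib]
    congr 1; refine Finset.sum_congr rfl fun k _ => by ring
  simp only [hsum]
  constructor
  · intro h
    have hk : ∀ k, 0 ≤ ξ k ∧ (ξ k = 0 → c k = 0) := fun k =>
      nonneg_and_eq_zero_of_forall_quadratic_nonneg (a := a) fun t => by
        simpa [Pi.single_apply, Finset.sum_add_distrib] using h (Pi.single k t)
    refine ⟨fun k => (hk k).1, fun k => (hk k).2, ?_⟩
    simpa [quadratic_neg_div, sub_nonneg] using h fun k => -c k / ξ k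
  · rintro ⟨hξ, hc, hle⟩ z
    have := Finset.sum_le_sum (s := Finset.univ) fun k _ =>
      neg_sq_div_le_quadratic (hξ k) (hc k) (z k)
    rw [Finset.sum_neg_distrib] at this
    linarith

theorem Matrix.IsSymm.exists_orthogonal_diagonalization {κ : Type*} [Fintype κ] [DecidableEq κ]
    {C : Matrix κ κ ℝ} (hC : C.IsSymm) :
    ∃ (P : Matrix κ κ ℝ) (ξ : κ → ℝ), Pᵀ * P = 1 ∧ Pᵀ * C * P = diagonal ξ := by
  have hH : C.IsHermitian := (conjTranspose_eq_transpose_of_trivial C).trans hC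
  refine ⟨hH.eigenvectorUnitary, hH.eigenvalues, ?_, ?_⟩
  · simpa [star_eq_conjTranspose] using mem_unitaryGroup_iff'.mp hH.eigenvectorUnitary.2
  · simpa [Unitary.conjStarAlgAut_star_apply, star_eq_conjTranspose]
      using hH.conjStarAlgAut_star_eigenvectorUnitary

lemma forall_nonneg_add_dotProduct_mulVec_iff {κ : Type*} [Fintype κ] [DecidableEq κ]
    {C P : Matrix κ κ ℝ} {ξ : κ → ℝ} (hP : Pᵀ * P = 1) (hD : Pᵀ * C * P = diagonal ξ)
    (a : ℝ) (y : κ → ℝ) :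
    (∀ w, 0 ≤ a + 2 * (y ⬝ᵥ w) + w ⬝ᵥ (C *ᵥ w)) ↔
      ∀ z, 0 ≤ a + 2 * ((y ᵥ* P) ⬝ᵥ z) + z ⬝ᵥ (diagonal ξ *ᵥ z) := by
  have hPz : ∀ z, a + 2 * (y ⬝ᵥ (P *ᵥ z)) + (P *ᵥ z) ⬝ᵥ (C *ᵥ (P *ᵥ z)) =
      a + 2 * ((y ᵥ* P) ⬝ᵥ z) + z ⬝ᵥ (diagonal ξ *ᵥ z) := fun z => by
    rw [← hD, dotProduct_mulVec y, ← mulVec_mulVec, ← mulVec_mulVec, dotProduct_mulVec z,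
      vecMul_transpose]
  refine ⟨fun h z => hPz z ▸ h (P *ᵥ z), fun h w => ?_⟩
  have hw : P *ᵥ (Pᵀ *ᵥ w) = w := by rw [mulVec_mulVec, mul_eq_one_comm.mp hP, one_mulVec]
  simpa only [← hPz, hw] using h (Pᵀ *ᵥ w)

lemma forall_nonneg_vecMul_apply_eq_zero_iff {τ κ : Type*} [Fintype τ] [DecidableEq τ]
    {s : τ → ℝ} (hs : ∀ i, s i ≠ 0) (N : Matrix τ κ ℝ) (k : κ) :
    (∀ u : τ → ℝ, 0 ≤ u → ((s * u) ᵥ* N) k = 0) ↔ ∀ i, N i k = 0 := by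
  refine ⟨fun h i => ?_, fun h u _ => Finset.sum_eq_zero fun i _ => mul_eq_zero_of_right _ (h i)⟩
  have := h (Pi.single i 1) (Pi.single_nonneg.mpr zero_le_one)
  rwa [← Pi.single_mul_right, mul_one, single_vecMul, Pi.smul_apply, smul_eq_mul,
    mul_eq_zero, or_iff_right (hs i)] at this

section Reduction

variable {ι : Type*} [Fintype ι] {b α : ι → ℝ} {Q : Matrix ι ι ℝ}

theorem forall_feasible_nonneg_iff_forall_blocks (hQ : Q.IsSymm) (h : ∀ i, |b i| ≤ α i) :
    (∀ v : ι → ℝ, (∑ i, b i * v i) + (∑ i, α i * |v i|) ≤ 0 → 0 ≤ v ⬝ᵥ (Q *ᵥ v)) ↔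
      ∀ u : {i // IsSignedIndex b α i} → ℝ, 0 ≤ u → ∀ w : {i // IsFreeIndex b α i} → ℝ,
        0 ≤ (constraintSign b α * u) ⬝ᵥ (Q.submatrix (↑) (↑) *ᵥ (constraintSign b α * u)) +
          2 * ((constraintSign b α * u) ᵥ* Q.submatrix (↑) (↑) ⬝ᵥ w) +
          w ⬝ᵥ (Q.submatrix (↑) (↑) *ᵥ w) := by
  have hblock : ∀ x w, (extendByZero (IsSignedIndex b α) x + extendByZero (IsFreeIndex b α) w) ⬝ᵥ
      (Q *ᵥ (extendByZero _ x + extendByZero _ w)) =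
        x ⬝ᵥ (Q.submatrix (↑) (↑) *ᵥ x) + 2 * (x ᵥ* Q.submatrix (↑) (↑) ⬝ᵥ w) +
          w ⬝ᵥ (Q.submatrix (↑) (↑) *ᵥ w) := fun x w => by
    rw [hQ.add_dotProduct_mulVec_add, extendByZero_dotProduct_mulVec_extendByZero,
      extendByZero_dotProduct_mulVec_extendByZero, extendByZero_dotProduct_mulVec_extendByZero,
      dotProduct_mulVec x _ w]
  constructor
  · intro H u hu w
    rw [← hblock]
    exact H _ ((feasible_iff_exists_extendByZero h _).mpr ⟨u, hu, w, rfl⟩)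
  · intro H v hv
    obtain ⟨u, hu, w, rfl⟩ := (feasible_iff_exists_extendByZero h v).mp hv
    rw [hblock]
    exact H u hu w

theorem forall_feasible_nonneg_iff_of_diagonalization [DecidableEq ι] (hQ : Q.IsSymm)
    (h : ∀ i, |b i| ≤ α i)
    {P : Matrix {i // IsFreeIndex b α i} {i // IsFreeIndex b α i} ℝ}
    {ξ : {i // IsFreeIndex b α i} → ℝ} (hP : Pᵀ * P = 1)
    (hD : Pᵀ * Q.submatrix (↑) (↑) * P = diagonal ξ) :
    (∀ v : ι → ℝ, (∑ i, b i * v i) + (∑ i, α i * |v i|) ≤ 0 → 0 ≤ v ⬝ᵥ (Q *ᵥ v)) ↔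
      (∀ k, 0 ≤ ξ k) ∧
      (∀ (i : {i // IsSignedIndex b α i}) k, ξ k = 0 →
        (Q.submatrix (↑) (↑) * P : Matrix {i // IsSignedIndex b α i} _ ℝ) i k = 0) ∧
      ∀ u : {i // IsSignedIndex b α i} → ℝ, 0 ≤ u →
        ∑ k, ((constraintSign b α * u) ᵥ* (Q.submatrix (↑) (↑) * P)) k ^ 2 / ξ k ≤
          (constraintSign b α * u) ⬝ᵥ (Q.submatrix (↑) (↑) *ᵥ (constraintSign b α * u)) := by
  rw [forall_feasible_nonneg_iff_forall_blocks hQ h]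
  simp only [forall_nonneg_add_dotProduct_mulVec_iff hP hD, forall_quadratic_nonneg_iff,
    vecMul_vecMul]
  have hs : ∀ i, constraintSign b α i ≠ 0 :=
    fun i => left_ne_zero_of_mul_eq_one (constraintSign_mul_self i)
  constructor
  · intro H
    refine ⟨(H 0 le_rfl).1, fun i k hk => ?_, fun u hu => (H u hu).2.2⟩
    exact (forall_nonneg_vecMul_apply_eq_zero_iff hs _ k).mp (fun u hu => (H u hu).2.1 k hk) i
  · rintro ⟨hξ, hker, hschur⟩ u hu
    refine ⟨hξ, fun k hk => ?_, hschur u hu⟩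
    exact (forall_nonneg_vecMul_apply_eq_zero_iff hs _ k).mpr (fun i => hker i k hk) u hu

end Reduction

lemma sum_sum_mul_sub_sum_ite_div {τ κ : Type*} [Fintype τ] [Fintype κ] (G : Matrix τ τ ℝ)
    (N : Matrix τ κ ℝ) {ξ : κ → ℝ} (hξ : ∀ k, 0 ≤ ξ k) (s u : τ → ℝ) :
    ∑ i, ∑ j, u i * u j * (s i * s j * G i j -
        ∑ k, if 0 < ξ k then s i * N i k * (s j * N j k) / ξ k else 0) =
      (s * u) ⬝ᵥ (G *ᵥ (s * u)) - ∑ k, ((s * u) ᵥ* N) k ^ 2 / ξ k := by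
  have hite : ∀ k (y : ℝ), (if 0 < ξ k then y / ξ k else 0) = y / ξ k := fun k y => by
    split_ifs with hk
    · rfl
    · rw [le_antisymm (not_lt.mp hk) (hξ k), div_zero]
  simp only [hite, mul_sub, Finset.sum_sub_distrib]
  congr 1
  · simp only [dotProduct, mulVec, Pi.mul_apply, Finset.mul_sum]
    exact Finset.sum_congr rfl fun i _ => Finset.sum_congr rfl fun j _ => by ring
  · simp only [vecMul, dotProduct, Pi.mul_apply, sq, Finset.sum_mul, Finset.sum_div,
      Finset.mul_sum]
    conv_rhs => rw [Finset.sum_comm]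
    refine Finset.sum_congr rfl fun i _ => ?_
    conv_rhs => rw [Finset.sum_comm]
    exact Finset.sum_congr rfl fun j _ => Finset.sum_congr rfl fun k _ => by ring

/-- Under `|bᵢ| ≤ αᵢ`, with index sets `I₊ = {i : −bᵢ = αᵢ > 0}`,
`I₋ = {i : bᵢ = αᵢ > 0}`, `I_f = {i : bᵢ = αᵢ = 0}`, the homogeneous program
`min ½vᵀQv  s.t.  bᵀv + ∑ αᵢ|vᵢ| ≤ 0` has optimal value zero (i.e. `vᵀQv ≥ 0` for all
feasible `v`) iff: (i) `Q_{I_f I_f}` is PSD with orthogonal eigen-decomposition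
`Pᵀ Q_{I_f I_f} P = diag ξ`, `ξ ≥ 0`; (ii) the rows `Q_{i I_f}` (`i ∈ I₊ ∪ I₋`)
annihilate the zero-eigenvalue columns `P⁰`; and (iii) the corresponding Schur complement
is copositive on the nonnegative orthant indexed by `I₊ ∪ I₋` (with the sign pattern
`+` on `I₊` and `−` on `I₋`). -/
theorem stmt19 {n : ℕ} (Q : Matrix (Fin n) (Fin n) ℝ) (hQ : ∀ i j, Q i j = Q j i)
    (b α : Fin n → ℝ) (h : ∀ i, |b i| ≤ α i) :
    (∀ v : Fin n → ℝ,
        (∑ i, b i * v i) + (∑ i, α i * |v i|) ≤ 0 →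
        0 ≤ ∑ i, ∑ j, Q i j * v i * v j) ↔
    (∃ (P : Matrix {i : Fin n // b i = 0 ∧ α i = 0} {i : Fin n // b i = 0 ∧ α i = 0} ℝ)
       (ξ : {i : Fin n // b i = 0 ∧ α i = 0} → ℝ),
      -- P is orthogonal
      P.transpose * P = 1 ∧
      -- eigen-decomposition of the principal submatrix Q_{I_f I_f}
      P.transpose * (Matrix.of
          fun i j : {i : Fin n // b i = 0 ∧ α i = 0} => Q i.1 j.1) * P
        = Matrix.diagonal ξ ∧
      -- (i) positive semidefiniteness: all eigenvalues are nonnegative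
      (∀ k, 0 ≤ ξ k) ∧
      -- (ii) [Q_{I₊ I_f}; Q_{I₋ I_f}] · P⁰ = 0
      (∀ i : Fin n, ((-b i = α i ∨ b i = α i) ∧ 0 < α i) →
        ∀ k, ξ k = 0 → (∑ a, Q i a.1 * P a k) = 0) ∧
      -- (iii) the Schur complement is copositive on the nonnegative orthant
      (∀ u : {i : Fin n // (-b i = α i ∨ b i = α i) ∧ 0 < α i} → ℝ,
        (∀ i, 0 ≤ u i) →
        0 ≤ ∑ i, ∑ j, u i * u j *
          ((if -b i.1 = α i.1 then (1:ℝ) else -1) * (if -b j.1 = α j.1 then (1:ℝ) else -1)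
              * Q i.1 j.1 -
           ∑ k, if 0 < ξ k then
              ((if -b i.1 = α i.1 then (1:ℝ) else -1) * (∑ a, Q i.1 a.1 * P a k)) *
              ((if -b j.1 = α j.1 then (1:ℝ) else -1) * (∑ a, Q j.1 a.1 * P a k)) / ξ k
            else 0))) := by
  have hQs : Q.IsSymm := IsSymm.ext fun i j => hQ j i
  simp only [sum_sum_mul_mul_eq_dotProduct_mulVec]
  constructor
  · intro hnonneg
    obtain ⟨P, ξ, hP, hD⟩ := (hQs.submatrix
      (Subtype.val : {i // IsFreeIndex b α i} → Fin n)).exists_orthogonal_diagonalization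
    obtain ⟨hξ, hker, hschur⟩ :=
      (forall_feasible_nonneg_iff_of_diagonalization hQs h hP hD).mp hnonneg
    refine ⟨P, ξ, hP, hD, hξ, fun i hi => hker ⟨i, hi⟩, fun u hu => ?_⟩
    exact (sub_nonneg.mpr (hschur u hu)).trans_eq
      (sum_sum_mul_sub_sum_ite_div _ _ hξ _ u).symm
  · rintro ⟨P, ξ, hP, hD, hξ, hker, hcop⟩
    refine (forall_feasible_nonneg_iff_of_diagonalization hQs h hP hD).mpr
      ⟨hξ, fun i => hker i.1 i.2, fun u hu => sub_nonneg.mp ?_⟩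
    exact (hcop u hu).trans_eq
      (sum_sum_mul_sub_sum_ite_div _ _ hξ _ u)
end
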